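/- arXiv:1301.3441 — 6 statements merged into one kernel-verified Lean document; each statement's English description precedes it below -/
import Mathlib

section
/- Let A = (e_1, ..., e_m) and B = (f_1, ..., f_n) be finite sequences of positive rationals. Then the sum over all shuffles σ of A and B of Prod(A)·Prod(B)/Prod(σ) equals 1; that is, ∑_{σ ∈ Sh(A,B)} (Prod(A)·Prod(B))/Prod(σ) = 1. -/
/-- `prodPS S` is the product `s₁ · (s₁+s₂) ··· (s₁+···+s_r)` of the partial sums
of the finite sequence `S = (s₁, …, s_r)`. -/
def prodPS (l : List ℚ) : ℚ := ((l.scanl (· + ·) 0).tail).prod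

/-- `shuffles A B` enumerates the shuffles of the sequences `A` and `B`:
the interleavings of `A` and `B`, indexed by the `binom(m+n,m)` choices of
positions occupied by the entries of `A` (so shuffles that coincide as
sequences are listed with multiplicity). -/
def shuffles {α : Type*} : List α → List α → List (List α)
  | [], l₂ => [l₂]
  | a :: l₁, [] => [a :: l₁]
  | a :: l₁, b :: l₂ =>
      (shuffles l₁ (b :: l₂)).map (a :: ·) ++ (shuffles (a :: l₁) l₂).map (b :: ·)
termination_by l₁ l₂ => l₁.length + l₂.length

namespace ShuffleAux

lemma shuffles_nil_right {α : Type*} (A : List α) : shuffles A [] = [A] := by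
  cases A <;> simp [shuffles]

lemma mem_shuffles_perm {α : Type*} (A B : List α) :
    ∀ σ ∈ shuffles A B, σ.Perm (A ++ B) := by
  induction A, B using shuffles.induct with
  | case1 l₂ => simp [shuffles]
  | case2 a l₁ => simp [shuffles]
  | case3 a l₁ b l₂ ih1 ih2 =>
    intro σ hσ
    simp only [shuffles, List.mem_append, List.mem_map] at hσ
    rcases hσ with ⟨τ, hτ, rfl⟩ | ⟨τ, hτ, rfl⟩
    · exact ((ih1 τ hτ).cons a)
    · exact ((ih2 τ hτ).cons b).trans List.perm_middle.symm

lemma sub1 {α : Type*} (a b : α) (L : List α) :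
    (shuffles [a] (L ++ [b])).Perm
      (((L ++ [b]) ++ [a]) :: (shuffles [a] L).map (· ++ [b])) := by
  induction L with
  | nil =>
    simp [shuffles]
    exact List.Perm.swap _ _ _
  | cons y L ih =>
    show (shuffles [a] (y :: (L ++ [b]))).Perm _
    simp only [shuffles, List.map_map, List.map_cons, List.map_nil, Function.comp,
      List.cons_append, List.nil_append, List.singleton_append, List.append_assoc]
    refine (List.Perm.cons _ (ih.map (y :: ·))).trans ?_
    simp only [List.map_cons, List.map_map, Function.comp, List.cons_append, List.append_assoc]
    exact List.Perm.swap _ _ _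

lemma sub2 {α : Type*} (a b : α) (L : List α) :
    (shuffles (L ++ [a]) [b]).Perm
      (((L ++ [a]) ++ [b]) :: (shuffles L [b]).map (· ++ [a])) := by
  induction L with
  | nil => simp [shuffles]
  | cons x L ih =>
    show (shuffles (x :: (L ++ [a])) [b]).Perm _
    rw [shuffles, shuffles_nil_right]
    refine (List.Perm.append_right _ (ih.map (x :: ·))).trans ?_
    rw [shuffles, shuffles_nil_right]
    simp only [List.map_append, List.map_map, List.map_cons, List.map_nil, Function.comp,
      List.cons_append, List.nil_append, List.append_assoc]
    exact List.Perm.refl _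

lemma perm_block {α : Type*} (p q r s : List α) :
    ((p ++ q) ++ (r ++ s)).Perm ((p ++ r) ++ (q ++ s)) := by
  simp only [List.append_assoc]
  refine List.Perm.append_left p ?_
  rw [← List.append_assoc, ← List.append_assoc]
  exact (List.perm_append_comm).append_right s

lemma shuffles_concat {α : Type*} (a b : α) (A B : List α) :
    (shuffles (A ++ [a]) (B ++ [b])).Perm
      ((shuffles A (B ++ [b])).map (· ++ [a]) ++ (shuffles (A ++ [a]) B).map (· ++ [b])) := by
  induction A, B using shuffles.induct with
  | case1 B =>
    simp only [List.nil_append, shuffles, List.map_cons, List.map_nil, List.singleton_append]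
    exact sub1 a b B
  | case2 x A =>
    simp only [List.nil_append, shuffles_nil_right, List.map_cons, List.map_nil]
    exact (sub2 a b (x :: A)).trans (List.perm_append_singleton _ _).symm
  | case3 x A y B ih1 ih2 =>
    show (shuffles (x :: (A ++ [a])) (y :: (B ++ [b]))).Perm _
    rw [shuffles]
    refine ((ih1.map (x :: ·)).append ((ih2.map (y :: ·)))).trans ?_
    conv_rhs => rw [show (x :: A) ++ [a] = x :: (A ++ [a]) from rfl,
      show (y :: B) ++ [b] = y :: (B ++ [b]) from rfl, shuffles, shuffles]
    simp only [List.map_map, List.map_append, Function.comp]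
    exact perm_block _ _ _ _

/-- product of the tail of a scanl of sums, with initial value `c` -/
noncomputable def tp (c : ℚ) (l : List ℚ) : ℚ := ((l.scanl (· + ·) c).tail).prod

lemma tp_nil (c : ℚ) : tp c [] = 1 := by simp [tp, List.scanl]

lemma tp_cons (c x : ℚ) (l : List ℚ) : tp c (x :: l) = (c + x) * tp (c + x) l := by
  simp only [tp, List.scanl]
  cases l <;> simp [List.scanl]

lemma prodPS_eq_tp (l : List ℚ) : prodPS l = tp 0 l := rfl

lemma tp_concat (x : ℚ) (l : List ℚ) : ∀ c, tp c (l ++ [x]) = tp c l * (c + l.sum + x) := by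
  induction l with
  | nil => intro c; simp [tp_nil, tp_cons]
  | cons y l ih =>
    intro c
    rw [List.cons_append, tp_cons, ih, tp_cons, List.sum_cons]
    ring

lemma tp_pos (l : List ℚ) (hl : ∀ x ∈ l, 0 < x) : ∀ c, 0 ≤ c → 0 < tp c l := by
  induction l with
  | nil => intro c _; rw [tp_nil]; norm_num
  | cons y l ih =>
    intro c hc
    rw [tp_cons]
    have hy := hl y (by simp)
    have : 0 < c + y := by linarith
    exact mul_pos this (ih (fun x hx => hl x (List.mem_cons_of_mem _ hx)) _ this.le)

lemma prodPS_pos (l : List ℚ) (hl : ∀ x ∈ l, 0 < x) : 0 < prodPS l :=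
  tp_pos l hl 0 le_rfl

lemma prodPS_concat (x : ℚ) (l : List ℚ) : prodPS (l ++ [x]) = prodPS l * (l.sum + x) := by
  rw [prodPS_eq_tp, prodPS_eq_tp, tp_concat, zero_add]

lemma sum_pos_of_mem (l : List ℚ) (hl : ∀ x ∈ l, 0 < x) (h : l ≠ []) : 0 < l.sum :=
  List.sum_pos l hl h

lemma aux : ∀ n (A B : List ℚ), A.length + B.length = n →
    (∀ x ∈ A, 0 < x) → (∀ x ∈ B, 0 < x) →
    ((shuffles A B).map (fun σ => prodPS A * prodPS B / prodPS σ)).sum = 1 := by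
  intro n
  induction n using Nat.strong_induction_on with
  | _ n ih =>
    intro A B hlen hA hB
    rcases A.eq_nil_or_concat with rfl | ⟨A', a, rfl⟩
    · have hB' : prodPS B ≠ 0 := (prodPS_pos B hB).ne'
      simp only [shuffles, List.map_cons, List.map_nil, List.sum_cons, List.sum_nil, add_zero]
      rw [show prodPS [] = 1 from rfl, one_mul, div_self hB']
    · rw [List.concat_eq_append] at *
      rcases B.eq_nil_or_concat with rfl | ⟨B', b, rfl⟩
      · have hA' : prodPS (A' ++ [a]) ≠ 0 := (prodPS_pos _ hA).ne'
        rw [shuffles_nil_right]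
        simp only [List.map_cons, List.map_nil, List.sum_cons, List.sum_nil, add_zero]
        rw [show prodPS [] = 1 from rfl, mul_one, div_self hA']
      · rw [List.concat_eq_append] at *
        -- both nonempty
        have hA'' : ∀ x ∈ A', 0 < x := fun x hx => hA x (by simp [hx])
        have hB'' : ∀ x ∈ B', 0 < x := fun x hx => hB x (by simp [hx])
        have ha : 0 < a := hA a (by simp)
        have hb : 0 < b := hB b (by simp)
        set sa : ℚ := A'.sum + a with hsa
        set sb : ℚ := B'.sum + b with hsb
        have hsa0 : 0 < sa := by
          have := List.sum_nonneg (l := A') (fun x hx => (hA'' x hx).le)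
          simp only [hsa]; linarith
        have hsb0 : 0 < sb := by
          have := List.sum_nonneg (l := B') (fun x hx => (hB'' x hx).le)
          simp only [hsb]; linarith
        have hT : (0:ℚ) < sa + sb := by linarith
        have hperm := shuffles_concat a b A' B'
        rw [(hperm.map _).sum_eq]
        rw [List.map_append, List.sum_append, List.map_map, List.map_map]
        have h1 : ∀ σ ∈ shuffles A' (B' ++ [b]),
            ((fun σ => prodPS (A' ++ [a]) * prodPS (B' ++ [b]) / prodPS σ) ∘ (· ++ [a])) σ
              = (sa / (sa + sb)) *
                (prodPS A' * prodPS (B' ++ [b]) / prodPS σ) := by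
          intro σ hσ
          have hperm' := mem_shuffles_perm _ _ σ hσ
          have hσpos : ∀ x ∈ σ, 0 < x := by
            intro x hx
            have := hperm'.mem_iff.mp hx
            rw [List.mem_append] at this
            rcases this with h | h
            · exact hA'' x h
            · exact hB x h
          have hσ0 : prodPS σ ≠ 0 := (prodPS_pos σ hσpos).ne'
          have hσsum : σ.sum = A'.sum + sb := by
            rw [hperm'.sum_eq, List.sum_append, List.sum_append]
            simp [hsb]
          simp only [Function.comp_apply, prodPS_concat, hσsum]
          have : A'.sum + sb + a = sa + sb := by rw [hsa]; ring
          rw [this]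
          field_simp
          ring
        have h2 : ∀ σ ∈ shuffles (A' ++ [a]) B',
            ((fun σ => prodPS (A' ++ [a]) * prodPS (B' ++ [b]) / prodPS σ) ∘ (· ++ [b])) σ
              = (sb / (sa + sb)) *
                (prodPS (A' ++ [a]) * prodPS B' / prodPS σ) := by
          intro σ hσ
          have hperm' := mem_shuffles_perm _ _ σ hσ
          have hσpos : ∀ x ∈ σ, 0 < x := by
            intro x hx
            have := hperm'.mem_iff.mp hx
            rw [List.mem_append] at this
            rcases this with h | h
            · exact hA x h
            · exact hB'' x h
          have hσ0 : prodPS σ ≠ 0 := (prodPS_pos σ hσpos).ne'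
          have hσsum : σ.sum = sa + B'.sum := by
            rw [hperm'.sum_eq, List.sum_append, List.sum_append]
            simp [hsa]
          simp only [Function.comp_apply]
          rw [prodPS_concat b σ, hσsum, show sa + B'.sum + b = sa + sb from by rw [hsb]; ring,
            prodPS_concat b B', ← hsb]
          field_simp
        rw [List.map_congr_left h1, List.map_congr_left h2,
          List.sum_map_mul_left, List.sum_map_mul_left]
        have e1 : ((shuffles A' (B' ++ [b])).map
            (fun σ => prodPS A' * prodPS (B' ++ [b]) / prodPS σ)).sum = 1 := by
          apply ih (A'.length + (B' ++ [b]).length) _ _ _ rfl hA'' hB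
          simp at hlen ⊢
          omega
        have e2 : ((shuffles (A' ++ [a]) B').map
            (fun σ => prodPS (A' ++ [a]) * prodPS B' / prodPS σ)).sum = 1 := by
          apply ih ((A' ++ [a]).length + B'.length) _ _ _ rfl hA hB''
          simp at hlen ⊢
          omega
        rw [e1, e2, mul_one, mul_one, ← add_div, div_self hT.ne']

end ShuffleAux

/-- **Lemma (shuffle identity).** If `A = (e₁,…,e_m)` and `B = (f₁,…,f_n)` are
finite sequences of positive rationals, then
`∑_{σ ∈ Sh(A,B)} Prod(A)·Prod(B)/Prod(σ) = 1`. -/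
theorem sum_shuffles_prod_div_eq_one (A B : List ℚ)
    (hA : ∀ x ∈ A, 0 < x) (hB : ∀ x ∈ B, 0 < x) :
    ((shuffles A B).map (fun σ => prodPS A * prodPS B / prodPS σ)).sum = 1 :=
  ShuffleAux.aux (A.length + B.length) A B rfl hA hB
end

section
/- Let A_1, A_2, ..., A_r be finite sequences of positive rationals. Then ∑_{σ ∈ Sh(A_1,...,A_r)} (Prod(A_1)·Prod(A_2)···Prod(A_r))/Prod(σ) = 1, where the sum is over all interleavings σ of the sequences A_1, ..., A_r. -/
open scoped List

/-- `shufflesN [A₁, …, A_r]` enumerates the interleavings (generalized shuffles)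
of the sequences `A₁, …, A_r`. -/
def shufflesN {α : Type*} : List (List α) → List (List α)
  | [] => [[]]
  | l :: ls => (shufflesN ls).flatMap (fun s => shuffles l s)

/-- Auxiliary: product of partial sums starting from `c`. -/
def PF (c : ℚ) : List ℚ → ℚ
  | [] => 1
  | x :: l => (c + x) * PF (c + x) l

lemma PF_eq (c : ℚ) (l : List ℚ) : PF c l = ((l.scanl (· + ·) c).tail).prod := by
  induction l generalizing c with
  | nil => simp [PF]
  | cons x l ih =>
    rw [List.scanl_cons]
    simp only [List.singleton_append, List.tail_cons]
    rw [PF, ih]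
    cases l with
    | nil => simp
    | cons z l' => rw [List.scanl_cons]; simp

lemma prodPS_eq (l : List ℚ) : prodPS l = PF 0 l := (PF_eq 0 l).symm

lemma PF_concat (c : ℚ) (l : List ℚ) (x : ℚ) :
    PF c (l ++ [x]) = PF c l * (c + l.sum + x) := by
  induction l generalizing c with
  | nil => simp [PF]
  | cons y l ih =>
    rw [List.cons_append]
    show (c + y) * PF (c + y) (l ++ [x]) = (c + y) * PF (c + y) l * (c + (y + l.sum) + x)
    rw [ih]; ring

lemma PF_pos (c : ℚ) (hc : 0 ≤ c) (l : List ℚ) (hl : ∀ x ∈ l, 0 < x) : 0 < PF c l := by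
  induction l generalizing c with
  | nil => norm_num [PF]
  | cons x l ih =>
    have hx : 0 < x := hl x (by simp)
    exact mul_pos (by linarith) (ih (c + x) (by linarith) fun y hy => hl y (by simp [hy]))

lemma prodPS_pos (l : List ℚ) (hl : ∀ x ∈ l, 0 < x) : 0 < prodPS l :=
  prodPS_eq l ▸ PF_pos 0 le_rfl l hl

lemma prodPS_concat (l : List ℚ) (x : ℚ) : prodPS (l ++ [x]) = prodPS l * (l.sum + x) := by
  rw [prodPS_eq, prodPS_eq, PF_concat]; ring

lemma shuffles_nil_right {α : Type*} (l : List α) : shuffles l [] = [l] := by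
  cases l <;> simp [shuffles]

lemma shuffles_perm {α : Type*} (l₁ l₂ : List α) :
    ∀ σ ∈ shuffles l₁ l₂, σ.Perm (l₁ ++ l₂) := by
  induction l₁, l₂ using shuffles.induct with
  | case1 l₂ => simp [shuffles]
  | case2 a l₁ => simp [shuffles]
  | case3 a l₁ b l₂ ih1 ih2 =>
    intro σ hσ
    rw [shuffles] at hσ
    rcases List.mem_append.1 hσ with h | h <;> obtain ⟨τ, hτ, rfl⟩ := List.mem_map.1 h
    · exact (ih1 τ hτ).cons a
    · exact ((ih2 τ hτ).cons b).trans List.perm_middle.symm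

lemma shuffles_concat_aux {α : Type*} (x y : α) :
    ∀ (n : ℕ) (X Y : List α), X.length + Y.length ≤ n →
    (shuffles (X ++ [x]) (Y ++ [y])).Perm
      ((shuffles (X ++ [x]) Y).map (· ++ [y]) ++ (shuffles X (Y ++ [y])).map (· ++ [x])) := by
  intro n
  induction n with
  | zero =>
    intro X Y h
    obtain ⟨rfl, rfl⟩ : X = [] ∧ Y = [] := by
      constructor <;> (apply List.eq_nil_of_length_eq_zero; omega)
    simp [shuffles, shuffles_nil_right]
  | succ n ih =>
    intro X Y h
    match X, Y with
    | [], [] => simp [shuffles, shuffles_nil_right]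
    | [], v :: Y' =>
      have hI := ih [] Y' (by simp at h ⊢; omega)
      calc shuffles ([] ++ [x]) ((v :: Y') ++ [y])
          = [x :: v :: (Y' ++ [y])] ++ (shuffles [x] (Y' ++ [y])).map (v :: ·) := by
            simp [shuffles]
        _ ~ [x :: v :: (Y' ++ [y])] ++
              (((shuffles [x] Y').map (· ++ [y]) ++ (shuffles [] (Y' ++ [y])).map (· ++ [x])).map
                (v :: ·)) := ((hI.map _).append_left _)
        _ = (shuffles ([] ++ [x]) (v :: Y')).map (· ++ [y]) ++
              (shuffles [] ((v :: Y') ++ [y])).map (· ++ [x]) := by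
            simp [shuffles, List.map_map, Function.comp]
    | u :: X', [] =>
      have hI := ih X' [] (by simp at h ⊢; omega)
      calc shuffles ((u :: X') ++ [x]) ([] ++ [y])
          = (shuffles (X' ++ [x]) [y]).map (u :: ·) ++ [y :: (u :: X' ++ [x])] := by
            simp [shuffles, shuffles_nil_right]
        _ ~ (((shuffles (X' ++ [x]) []).map (· ++ [y]) ++ (shuffles X' ([] ++ [y])).map (· ++ [x])).map
              (u :: ·)) ++ [y :: (u :: X' ++ [x])] := ((hI.map _).append_right _)
        _ = (shuffles ((u :: X') ++ [x]) []).map (· ++ [y]) ++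
              (shuffles (u :: X') ([] ++ [y])).map (· ++ [x]) := by
            simp [shuffles, shuffles_nil_right, List.map_map, Function.comp]
    | u :: X', v :: Y' =>
      have h1 := ih X' (v :: Y') (by simp at h ⊢; omega)
      have h2 := ih (u :: X') Y' (by simp at h ⊢; omega)
      calc shuffles ((u :: X') ++ [x]) ((v :: Y') ++ [y])
          = (shuffles (X' ++ [x]) (v :: Y' ++ [y])).map (u :: ·) ++
            (shuffles (u :: X' ++ [x]) (Y' ++ [y])).map (v :: ·) := by
            simp [shuffles]
        _ ~ ((shuffles (X' ++ [x]) (v :: Y')).map (· ++ [y]) ++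
              (shuffles X' (v :: Y' ++ [y])).map (· ++ [x])).map (u :: ·) ++
            ((shuffles (u :: X' ++ [x]) Y').map (· ++ [y]) ++
              (shuffles (u :: X') (Y' ++ [y])).map (· ++ [x])).map (v :: ·) :=
            (h1.map _).append (h2.map _)
        _ = ((shuffles (X' ++ [x]) (v :: Y')).map ((u :: ·) ∘ (· ++ [y])) ++
              (shuffles X' (v :: Y' ++ [y])).map ((u :: ·) ∘ (· ++ [x]))) ++
            ((shuffles (u :: X' ++ [x]) Y').map ((v :: ·) ∘ (· ++ [y])) ++
              (shuffles (u :: X') (Y' ++ [y])).map ((v :: ·) ∘ (· ++ [x]))) := by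
            simp [List.map_map]
        _ ~ ((shuffles (X' ++ [x]) (v :: Y')).map ((u :: ·) ∘ (· ++ [y])) ++
              (shuffles (u :: X' ++ [x]) Y').map ((v :: ·) ∘ (· ++ [y]))) ++
            ((shuffles X' (v :: Y' ++ [y])).map ((u :: ·) ∘ (· ++ [x])) ++
              (shuffles (u :: X') (Y' ++ [y])).map ((v :: ·) ∘ (· ++ [x]))) := by
            simp only [List.append_assoc]
            exact (List.perm_append_comm_assoc _ _ _).append_left _
        _ = (shuffles ((u :: X') ++ [x]) (v :: Y')).map (· ++ [y]) ++
              (shuffles (u :: X') ((v :: Y') ++ [y])).map (· ++ [x]) := by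
            simp [shuffles, List.map_map, Function.comp_def]

lemma shuffles_concat {α : Type*} (X Y : List α) (x y : α) :
    (shuffles (X ++ [x]) (Y ++ [y])).Perm
      ((shuffles (X ++ [x]) Y).map (· ++ [y]) ++ (shuffles X (Y ++ [y])).map (· ++ [x])) :=
  shuffles_concat_aux x y (X.length + Y.length) X Y le_rfl

lemma sum_pos_of_pos (l : List ℚ) (hl : ∀ x ∈ l, 0 < x) : 0 ≤ l.sum := by
  induction l with
  | nil => simp
  | cons x l ih =>
    have := hl x (by simp)
    have := ih fun y hy => hl y (by simp [hy])
    simp only [List.sum_cons]; linarith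

lemma sum_shuffles_aux : ∀ (n : ℕ) (A B : List ℚ), A.length + B.length ≤ n →
    (∀ x ∈ A, 0 < x) → (∀ x ∈ B, 0 < x) →
    ((shuffles A B).map (fun σ => prodPS A * prodPS B / prodPS σ)).sum = 1 := by
  intro n
  induction n with
  | zero =>
    intro A B h _ _
    obtain ⟨rfl, rfl⟩ : A = [] ∧ B = [] := by
      constructor <;> (apply List.eq_nil_of_length_eq_zero; omega)
    simp [shuffles, prodPS]
  | succ n ih =>
    intro A B h hA hB
    rcases A.eq_nil_or_concat with rfl | ⟨X, x, rfl⟩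
    · have hBpos := prodPS_pos B hB
      simp [shuffles, prodPS_eq, PF]
      rw [← prodPS_eq]
      exact hBpos.ne'
    simp only [List.concat_eq_append] at h hA ⊢
    rcases B.eq_nil_or_concat with rfl | ⟨Y, y, rfl⟩
    · have hApos := prodPS_pos (X ++ [x]) hA
      rw [shuffles_nil_right]
      simp only [List.map_cons, List.map_nil, List.sum_cons, List.sum_nil, add_zero]
      rw [show prodPS [] = 1 by simp [prodPS_eq, PF], mul_one, div_self hApos.ne']
    simp only [List.concat_eq_append] at h hB ⊢
    -- both nonempty
    have hX : ∀ z ∈ X, 0 < z := fun z hz => hA z (by simp [hz])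
    have hY : ∀ z ∈ Y, 0 < z := fun z hz => hB z (by simp [hz])
    have hx : 0 < x := hA x (by simp)
    have hy : 0 < y := hB y (by simp)
    have hPX := prodPS_pos X hX
    have hPY := prodPS_pos Y hY
    have hPA := prodPS_pos (X ++ [x]) hA
    have hPB := prodPS_pos (Y ++ [y]) hB
    have hSX := sum_pos_of_pos X hX
    have hSY := sum_pos_of_pos Y hY
    have hT : 0 < (X ++ [x]).sum + (Y ++ [y]).sum := by
      simp only [List.sum_append, List.sum_cons, List.sum_nil]; linarith
    rw [((shuffles_concat X Y x y).map _).sum_eq, List.map_append, List.sum_append,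
      List.map_map, List.map_map]
    have e1 : ∀ σ ∈ shuffles (X ++ [x]) Y,
        ((fun σ => prodPS (X ++ [x]) * prodPS (Y ++ [y]) / prodPS σ) ∘ (· ++ [y])) σ =
        (prodPS (Y ++ [y]) / (((X ++ [x]).sum + (Y ++ [y]).sum) * prodPS Y)) *
          (prodPS (X ++ [x]) * prodPS Y / prodPS σ) := by
      intro σ hσ
      have hs : σ.sum = (X ++ [x]).sum + Y.sum := by
        rw [(shuffles_perm _ _ σ hσ).sum_eq, List.sum_append]
      have hσpos : 0 < prodPS σ := prodPS_pos σ fun z hz => by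
        rcases List.mem_append.1 ((shuffles_perm _ _ σ hσ).mem_iff.1 hz) with h' | h'
        · exact hA z h'
        · exact hY z h'
      simp only [Function.comp_apply, prodPS_concat, hs]
      have : (X ++ [x]).sum + Y.sum + y = (X ++ [x]).sum + (Y ++ [y]).sum := by
        simp; ring
      rw [this]
      field_simp
    have e2 : ∀ σ ∈ shuffles X (Y ++ [y]),
        ((fun σ => prodPS (X ++ [x]) * prodPS (Y ++ [y]) / prodPS σ) ∘ (· ++ [x])) σ =
        (prodPS (X ++ [x]) / (((X ++ [x]).sum + (Y ++ [y]).sum) * prodPS X)) *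
          (prodPS X * prodPS (Y ++ [y]) / prodPS σ) := by
      intro σ hσ
      have hs : σ.sum = X.sum + (Y ++ [y]).sum := by
        rw [(shuffles_perm _ _ σ hσ).sum_eq]; simp
      have hσpos : 0 < prodPS σ := prodPS_pos σ fun z hz => by
        rcases List.mem_append.1 ((shuffles_perm _ _ σ hσ).mem_iff.1 hz) with h' | h'
        · exact hX z h'
        · exact hB z h'
      simp only [Function.comp_apply, prodPS_concat, hs]
      have : X.sum + (Y ++ [y]).sum + x = (X ++ [x]).sum + (Y ++ [y]).sum := by
        simp; ring
      rw [this]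
      field_simp
    rw [List.map_congr_left e1, List.map_congr_left e2,
      List.sum_map_mul_left, List.sum_map_mul_left,
      ih (X ++ [x]) Y (by simp at h ⊢; omega) hA hY,
      ih X (Y ++ [y]) (by simp at h ⊢; omega) hX hB]
    rw [prodPS_concat, prodPS_concat]
    have hSB : 0 < (Y ++ [y]).sum := by simp; linarith
    have hSA : 0 < (X ++ [x]).sum := by simp; linarith
    field_simp
    ring
    simp only [List.sum_append, List.sum_cons, List.sum_nil]; ring

lemma sum_flatMap' {α : Type*} (l : List α) (f : α → List ℚ) :
    (l.flatMap f).sum = (l.map (fun a => (f a).sum)).sum := by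
  induction l <;> simp [*]

lemma shufflesN_perm {α : Type*} (M : List (List α)) :
    ∀ σ ∈ shufflesN M, σ.Perm M.flatten := by
  induction M with
  | nil => simp [shufflesN]
  | cons l ls ih =>
    intro σ hσ
    rw [shufflesN, List.mem_flatMap] at hσ
    obtain ⟨s, hs, hσ⟩ := hσ
    exact (shuffles_perm l s σ hσ).trans (((ih s hs).append_left l).trans (by simp))

/-- **Lemma (generalized shuffle identity).** If `A₁, …, A_r` are finite
sequences of positive rationals, then
`∑_{σ ∈ Sh(A₁,…,A_r)} Prod(A₁)·Prod(A₂)···Prod(A_r)/Prod(σ) = 1`. -/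
theorem sum_shufflesN_prod_div_eq_one (L : List (List ℚ))
    (hL : ∀ l ∈ L, ∀ x ∈ l, 0 < x) :
    ((shufflesN L).map (fun σ => (L.map prodPS).prod / prodPS σ)).sum = 1 := by
  induction L with
  | nil => simp [shufflesN, prodPS]
  | cons l ls ih =>
    have hl : ∀ x ∈ l, 0 < x := hL l (by simp)
    have hls : ∀ m ∈ ls, ∀ x ∈ m, 0 < x := fun m hm => hL m (by simp [hm])
    rw [shufflesN, List.map_flatMap, sum_flatMap']
    have key : ∀ s ∈ shufflesN ls,
        (((shuffles l s).map (fun σ => ((l :: ls).map prodPS).prod / prodPS σ)).sum) =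
        (ls.map prodPS).prod / prodPS s := by
      intro s hs
      have hspos : ∀ x ∈ s, 0 < x := fun x hx => by
        have := (shufflesN_perm ls s hs).mem_iff.1 hx
        rw [List.mem_flatten] at this
        obtain ⟨m, hm, hxm⟩ := this
        exact hls m hm x hxm
      have hPs := prodPS_pos s hspos
      have hPl := prodPS_pos l hl
      have e : ∀ σ ∈ shuffles l s,
          (fun σ => ((l :: ls).map prodPS).prod / prodPS σ) σ =
          ((ls.map prodPS).prod / prodPS s) * (prodPS l * prodPS s / prodPS σ) := by
        intro σ hσ
        have hσpos : 0 < prodPS σ := prodPS_pos σ fun z hz => by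
          rcases List.mem_append.1 ((shuffles_perm _ _ σ hσ).mem_iff.1 hz) with h' | h'
          · exact hl z h'
          · exact hspos z h'
        simp only [List.map_cons, List.prod_cons]
        field_simp
      rw [List.map_congr_left e, List.sum_map_mul_left,
        sum_shuffles_aux (l.length + s.length) l s le_rfl hl hspos, mul_one]
    rw [List.map_congr_left key]
    exact ih hls
end

section
/- Let s_1, ..., s_r be positive rationals. Then the sum over all permutations σ of {1,...,r} of 1/(s_{σ(1)} · (s_{σ(1)}+s_{σ(2)}) ··· (s_{σ(1)}+s_{σ(2)}+···+s_{σ(r)})) equals 1/(s_1 · s_2 ··· s_r). -/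
open scoped BigOperators

/-- Auxiliary "tail sums" version, proved by induction on `r`. -/
theorem sum_perm_inv_tailSums (r : ℕ) (s : Fin r → ℚ) (hs : ∀ i, 0 < s i) :
    ∑ σ : Equiv.Perm (Fin r),
        (∏ i : Fin r, ∑ j ∈ Finset.univ.filter (fun j : Fin r => i ≤ j), s (σ j))⁻¹
      = (∏ i : Fin r, s i)⁻¹ := by
  induction r with
  | zero => simp
  | succ r ih =>
    rw [← Equiv.sum_comp Equiv.Perm.decomposeFin.symm, Fintype.sum_prod_type]
    have hS : (0:ℚ) < ∑ j : Fin (r+1), s j :=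
      Finset.sum_pos (fun i _ => hs i) Finset.univ_nonempty
    have key : ∀ p : Fin (r+1), ∀ e : Equiv.Perm (Fin r),
        (∏ i : Fin (r+1), ∑ j ∈ Finset.univ.filter (fun j : Fin (r+1) => i ≤ j),
            s (Equiv.Perm.decomposeFin.symm (p, e) j))
        = (∑ j : Fin (r+1), s j) *
          ∏ i : Fin r, ∑ j ∈ Finset.univ.filter (fun j : Fin r => i ≤ j),
            (fun m : Fin r => s (Equiv.swap 0 p m.succ)) (e j) := by
      intro p e
      rw [Fin.prod_univ_succ]
      congr 1
      · rw [show (Finset.univ.filter (fun j : Fin (r+1) => (0:Fin (r+1)) ≤ j)) = Finset.univ by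
          simp [Fin.zero_le]]
        exact Equiv.sum_comp (Equiv.Perm.decomposeFin.symm (p, e)) s
      · refine Finset.prod_congr rfl fun i _ => ?_
        rw [Finset.sum_filter, Finset.sum_filter, Fin.sum_univ_succ]
        rw [if_neg (by simp [Fin.le_def, Fin.succ_pos i, Nat.succ_le, Fin.lt_def])]
        rw [zero_add]
        refine Finset.sum_congr rfl fun m _ => ?_
        simp only [Fin.succ_le_succ_iff, Equiv.Perm.decomposeFin_symm_apply_succ]
    have prodswap : ∀ p : Fin (r+1),
        s p * ∏ m : Fin r, s (Equiv.swap 0 p m.succ) = ∏ j : Fin (r+1), s j := by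
      intro p
      have := Fin.prod_univ_succ (fun j : Fin (r+1) => s (Equiv.swap 0 p j))
      rw [Equiv.prod_comp (Equiv.swap 0 p) s, Equiv.swap_apply_left] at this
      exact this.symm
    have hP : (0:ℚ) < ∏ j : Fin (r+1), s j := Finset.prod_pos (fun i _ => hs i)
    calc ∑ p : Fin (r+1), ∑ e : Equiv.Perm (Fin r),
            (∏ i : Fin (r+1), ∑ j ∈ Finset.univ.filter (fun j : Fin (r+1) => i ≤ j),
              s (Equiv.Perm.decomposeFin.symm (p, e) j))⁻¹
        = ∑ p : Fin (r+1), (∑ j : Fin (r+1), s j)⁻¹ *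
            (∏ m : Fin r, s (Equiv.swap 0 p m.succ))⁻¹ := by
          refine Finset.sum_congr rfl fun p _ => ?_
          have step1 : ∀ e : Equiv.Perm (Fin r),
              (∏ i : Fin (r+1), ∑ j ∈ Finset.univ.filter (fun j : Fin (r+1) => i ≤ j),
                s (Equiv.Perm.decomposeFin.symm (p, e) j))⁻¹
              = (∑ j : Fin (r+1), s j)⁻¹ *
                (∏ i : Fin r, ∑ j ∈ Finset.univ.filter (fun j : Fin r => i ≤ j),
                  (fun m : Fin r => s (Equiv.swap 0 p m.succ)) (e j))⁻¹ := by
            intro e; rw [key p e, mul_inv]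
          rw [Finset.sum_congr rfl (fun e _ => step1 e), ← Finset.mul_sum,
            ih (fun m : Fin r => s (Equiv.swap 0 p m.succ)) (fun m => hs _)]
      _ = ∑ p : Fin (r+1), (∑ j : Fin (r+1), s j)⁻¹ * (s p * (∏ j : Fin (r+1), s j)⁻¹) := by
          refine Finset.sum_congr rfl fun p _ => ?_
          congr 1
          rw [← prodswap p, mul_inv, mul_inv_cancel_left₀ (ne_of_gt (hs p))]
      _ = (∏ j : Fin (r+1), s j)⁻¹ := by
          rw [← Finset.mul_sum, ← Finset.sum_mul, inv_mul_cancel_left₀ (ne_of_gt hS)]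

/-- **Lemma.** For positive rationals `s₁, …, s_r`, the sum over all `r!`
permutations `σ` of `{1,…,r}` of
`1/(s_{σ(1)} · (s_{σ(1)}+s_{σ(2)}) ··· (s_{σ(1)}+···+s_{σ(r)}))`
equals `1/(s₁ · s₂ ··· s_r)`. -/
theorem sum_perm_inv_partialSums (r : ℕ) (s : Fin r → ℚ) (hs : ∀ i, 0 < s i) :
    ∑ σ : Equiv.Perm (Fin r),
        (∏ i : Fin r, ∑ j ∈ Finset.univ.filter (fun j : Fin r => j ≤ i), s (σ j))⁻¹
      = (∏ i : Fin r, s i)⁻¹ := by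
  rw [← sum_perm_inv_tailSums r s hs]
  rw [← Equiv.sum_comp (Equiv.mulRight (Fin.revPerm : Equiv.Perm (Fin r)))]
  refine Finset.sum_congr rfl fun σ _ => ?_
  congr 1
  rw [← Equiv.prod_comp (Fin.revPerm : Equiv.Perm (Fin r))]
  refine Finset.prod_congr rfl fun i _ => ?_
  rw [Finset.sum_filter, Finset.sum_filter,
    ← Equiv.sum_comp (Fin.revPerm : Equiv.Perm (Fin r))]
  refine Finset.sum_congr rfl fun j _ => ?_
  simp [Fin.rev_le_rev, Equiv.Perm.mul_apply]
end

section
/- Let β = ∑_{k=1}^s a_k ⟨d^k⟩ be a finite rational linear combination of pure diagrams, let e be a positive integer, and let K(e) be the diagram with K(e)_{0,0} = K(e)_{1,e} = 1 and all other entries 0 (the Betti diagram of the Koszul complex on a single form of degree e). Then β · K(e) = e · ∑_{k=1}^s a_k ∑_{σ ∈ Sh(Δ(d^k),(e))} ⟨Σ(σ, d^k_0)⟩, where the inner sum is over all sequences σ obtained by inserting e into the sequence Δ(d^k) at one of its possible positions. -/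
open scoped BigOperators

/-- A diagram is a finitely supported function `ℕ × ℤ → ℚ`.  The tensor product
of diagrams is the convolution multiplication of `AddMonoidAlgebra`:
`(β·β')_{i,j} = ∑_{i₁+i₂=i, j₁+j₂=j} β_{i₁,j₁}·β'_{i₂,j₂}`. -/
abbrev Diagram : Type := AddMonoidAlgebra ℚ (ℕ × ℤ)

/-- The pure diagram `⟨d⟩` associated to a degree sequence `d = (d₀,…,d_n)`
(recorded as a list of integers): `⟨d⟩_{i,d_i} = ∏_{k ≠ i} 1/|d_i − d_k|`
for `0 ≤ i ≤ n`, and all other entries `0`. -/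
noncomputable def pureDiagram (d : List ℤ) : Diagram :=
  ∑ i ∈ Finset.range d.length,
    AddMonoidAlgebra.single (i, d.getD i 0)
      (∏ k ∈ (Finset.range d.length).erase i, |(d.getD i 0 : ℚ) - (d.getD k 0 : ℚ)|⁻¹)

/-- The first difference `Δ(d) = (d₁−d₀, d₂−d₁, …, d_n−d_{n−1})` of a degree
sequence `d = (d₀,…,d_n)`. -/
def delta (d : List ℤ) : List ℤ := List.zipWith (fun a b => b - a) d d.tail

/-- `Σ(σ,e) = (e, e+σ₁, e+σ₁+σ₂, …, e+σ₁+···+σ_r)` for a finite sequence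
`σ = (σ₁,…,σ_r)` and an integer `e`. -/
def sigmaSeq (σ : List ℤ) (e : ℤ) : List ℤ := σ.scanl (· + ·) e

/-- The diagram `K(e)` of the Koszul complex on one form of degree `e`:
`K(e)_{0,0} = K(e)_{1,e} = 1` and all other entries `0`. -/
noncomputable def koszulDiagram (e : ℤ) : Diagram :=
  AddMonoidAlgebra.single ((0 : ℕ), (0 : ℤ)) 1 + AddMonoidAlgebra.single ((1 : ℕ), e) 1

section Aux

open Finset

lemma shuffles_single {α : Type*} (e : α) : ∀ (A : List α),
    (shuffles A [e]).Perm ((List.range (A.length+1)).map (fun m => A.insertIdx m e))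
  | [] => by simp [shuffles, List.range_succ]
  | a :: l => by
    rw [shuffles]
    have h1 : shuffles (a :: l) ([] : List α) = [a :: l] := by rw [shuffles]
    have h2 : List.range ((a::l).length + 1)
        = 0 :: (List.range (l.length + 1)).map Nat.succ := by
      simp [List.range_succ_eq_map]
    rw [h1, h2, List.map_cons]
    refine List.Perm.trans (l₂ := ((a::l).insertIdx 0 e) :: ((shuffles l [e]).map (a :: ·))) ?_ ?_
    · simpa using (List.perm_append_singleton _ _)
    · refine List.Perm.cons _ ?_
      have := (shuffles_single e l).map (a :: ·)
      simpa [Function.comp_def, Nat.succ_eq_add_one, List.map_map, List.insertIdx_succ_cons] using this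

lemma scanl_add_right (x : ℤ) : ∀ (l : List ℤ) (a : ℤ),
    l.scanl (· + ·) (a + x) = (l.scanl (· + ·) a).map (· + x)
  | [], a => by simp
  | b :: l, a => by
    simp only [List.scanl_cons, List.map_cons]
    rw [show a + x + b = a + b + x by ring, scanl_add_right x l (a+b)]

lemma sigmaSeq_delta : ∀ (d : List ℤ), d ≠ [] → sigmaSeq (delta d) d.headI = d
  | [a], _ => by simp [delta, sigmaSeq]
  | a :: b :: t, _ => by
    have ih := sigmaSeq_delta (b :: t) (by simp)
    simp only [delta, sigmaSeq, List.tail_cons, List.zipWith_cons_cons, List.scanl_cons,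
      List.headI] at ih ⊢
    rw [show a + (b - a) = b by ring]
    exact congrArg (a :: ·) ih

lemma scanl_insertIdx (e : ℤ) : ∀ (m : ℕ) (l : List ℤ) (a : ℤ), m ≤ l.length →
    (l.insertIdx m e).scanl (· + ·) a
      = ((l.scanl (· + ·) a).take (m+1)) ++ ((l.scanl (· + ·) a).drop m).map (· + e)
  | 0, l, a, _ => by
    simp only [List.insertIdx_zero, List.scanl_cons, List.drop_zero]
    rw [scanl_add_right]
    cases l <;> simp
  | m + 1, [], a, h => by simp at h
  | m + 1, b :: l, a, h => by
    simp only [List.insertIdx_succ_cons, List.scanl_cons, List.take_succ_cons, List.drop_succ_cons]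
    rw [scanl_insertIdx e m l (a+b) (by simpa using h)]
    simp

lemma E_length (d : List ℤ) (e : ℤ) (m : ℕ) (hm : m < d.length) :
    (d.take (m+1) ++ (d.drop m).map (· + e)).length = d.length + 1 := by
  simp only [List.length_append, List.length_take, List.length_map, List.length_drop]
  omega

lemma E_getD_le (d : List ℤ) (e : ℤ) (m : ℕ) {i : ℕ} (him : i ≤ m) (hm : m < d.length) :
    (d.take (m+1) ++ (d.drop m).map (· + e)).getD i 0 = d.getD i 0 := by
  have h1 : i < (d.take (m+1)).length := by simp; omega
  have h2 : i < (d.take (m+1) ++ (d.drop m).map (· + e)).length := by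
    rw [E_length d e m hm]; omega
  rw [List.getD_eq_getElem _ _ h2, List.getElem_append_left h1, List.getElem_take,
    List.getD_eq_getElem _ _ (by omega)]

lemma E_getD_gt (d : List ℤ) (e : ℤ) (m : ℕ) {i : ℕ} (him : m < i) (hi : i < d.length + 1) :
    (d.take (m+1) ++ (d.drop m).map (· + e)).getD i 0 = d.getD (i-1) 0 + e := by
  have hm : m < d.length := by omega
  have h1 : (d.take (m+1)).length = m + 1 := by simp; omega
  have h2 : i < (d.take (m+1) ++ (d.drop m).map (· + e)).length := by
    rw [E_length d e m hm]; omega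
  rw [List.getD_eq_getElem _ _ h2, List.getElem_append_right (by omega)]
  rw [List.getElem_map]
  rw [List.getElem_drop]
  rw [List.getD_eq_getElem _ _ (show i - 1 < d.length by omega)]
  congr 2
  omega

lemma erase_range_split {i L : ℕ} (h : i < L) :
    (range L).erase i = range i ∪ Ico (i+1) L := by
  ext k; simp only [mem_erase, mem_range, mem_union, mem_Ico]; omega

lemma frac_split {u e : ℚ} (hu : 0 < u) (he : 0 < e) :
    e * (u⁻¹ * (u + e)⁻¹) = u⁻¹ - (u + e)⁻¹ := by
  have h1 : u ≠ 0 := ne_of_gt hu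
  have h2 : u + e ≠ 0 := by positivity
  field_simp
  ring

lemma erase_Ico_split {i m L : ℕ} (hm : m ≤ i) (h : i < L) :
    (Ico m L).erase i = Ico m i ∪ Ico (i+1) L := by
  ext k; simp only [mem_erase, mem_union, mem_Ico]; omega

lemma key1 {e : ℚ} (he : 0 < e) {L i : ℕ} (hiL : i < L) (x : ℕ → ℚ)
    (hx : ∀ ⦃a b : ℕ⦄, a < b → b < L → x a < x b) :
    e * ∑ m ∈ Ico i L, (∏ k ∈ (range (m+1)).erase i, |x i - x k|⁻¹) *
        ∏ k ∈ Ico m L, (x k + e - x i)⁻¹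
      = ∏ k ∈ (range L).erase i, |x i - x k|⁻¹ := by
  have habs : ∀ k, i < k → k < L → |x i - x k| = x k - x i := fun k h1 h2 => by
    rw [abs_sub_comm, abs_of_pos (by linarith [hx h1 h2])]
  have hdisj : ∀ m : ℕ, Disjoint (range i) (Ico (i+1) m) := fun m => by
    rw [disjoint_left]; intro k hk hk'; simp only [mem_range, mem_Ico] at *; omega
  set P : ℚ := ∏ k ∈ range i, |x i - x k|⁻¹ with hP
  set A : ℕ → ℚ := fun t => (∏ k ∈ Ico (i+1) (i+t+1), |x i - x k|⁻¹) *
      ∏ k ∈ Ico (i+t+1) L, (x k + e - x i)⁻¹ with hA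
  obtain ⟨M, hM⟩ : ∃ M, L - i = M + 1 := ⟨L - i - 1, by omega⟩
  have hLM : L = i + M + 1 := by omega
  have hcore : ∑ m ∈ Ico i L, e * ((∏ k ∈ Ico (i+1) (m+1), |x i - x k|⁻¹) *
      ∏ k ∈ Ico m L, (x k + e - x i)⁻¹) = A M := by
    rw [Finset.sum_Ico_eq_sum_range, hM, Finset.sum_range_succ']
    have h0 : e * ((∏ k ∈ Ico (i+1) (i+0+1), |x i - x k|⁻¹) *
        ∏ k ∈ Ico (i+0) L, (x k + e - x i)⁻¹) = A 0 := by
      rw [show i + 0 = i from rfl,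
        Finset.prod_eq_prod_Ico_succ_bot hiL (f := fun k => (x k + e - x i)⁻¹)]
      have h1 : x i + e - x i = e := by ring
      have h2 : Ico (i+1) (i+0+1) = ∅ := by exact Ico_self _
      rw [h1, h2, prod_empty]
      simp only [hA]
      rw [h2, prod_empty, one_mul, one_mul, ← mul_assoc, mul_inv_cancel₀ (ne_of_gt he), one_mul]
    rw [h0]
    have hstep : ∀ t ∈ range M, e * ((∏ k ∈ Ico (i+1) (i+(t+1)+1), |x i - x k|⁻¹) *
        ∏ k ∈ Ico (i+(t+1)) L, (x k + e - x i)⁻¹) = A (t+1) - A t := by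
      intro t ht
      rw [mem_range] at ht
      set m : ℕ := i + t + 1 with hm
      have hmL : m < L := by omega
      have him : i + 1 ≤ m := by omega
      have h3 : i + (t+1) + 1 = m + 1 := by omega
      have h4 : i + (t+1) = m := by omega
      rw [h3, h4]
      rw [Finset.prod_Ico_succ_top him (f := fun k => |x i - x k|⁻¹),
        Finset.prod_eq_prod_Ico_succ_bot hmL (f := fun k => (x k + e - x i)⁻¹)]
      have hu : |x i - x m| = x m - x i := habs m (by omega) hmL
      have hu2 : x m + e - x i = (x m - x i) + e := by ring
      rw [hu, hu2]
      have hupos : 0 < x m - x i := by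
        have := hx (show i < m by omega) hmL; linarith
      set C1 : ℚ := ∏ k ∈ Ico (i+1) m, |x i - x k|⁻¹
      set C2 : ℚ := ∏ k ∈ Ico (m+1) L, (x k + e - x i)⁻¹
      have hAt1 : A (t+1) = C1 * (x m - x i)⁻¹ * C2 := by
        simp only [hA]
        rw [h3, Finset.prod_Ico_succ_top him (f := fun k => |x i - x k|⁻¹), hu]
      have hAt : A t = C1 * (((x m - x i) + e)⁻¹ * C2) := by
        simp only [hA]
        rw [Finset.prod_eq_prod_Ico_succ_bot hmL (f := fun k => (x k + e - x i)⁻¹), hu2]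
      rw [hAt1, hAt]
      have := frac_split hupos he
      set u : ℚ := x m - x i
      calc e * (C1 * u⁻¹ * ((u + e)⁻¹ * C2))
          = (e * (u⁻¹ * (u+e)⁻¹)) * (C1 * C2) := by ring
        _ = (u⁻¹ - (u+e)⁻¹) * (C1 * C2) := by rw [this]
        _ = C1 * u⁻¹ * C2 - C1 * ((u + e)⁻¹ * C2) := by ring
    rw [Finset.sum_congr rfl hstep, Finset.sum_range_sub]
    ring
  have hAM : A M = ∏ k ∈ Ico (i+1) L, |x i - x k|⁻¹ := by
    simp only [hA]
    rw [show i + M + 1 = L from hLM.symm]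
    rw [Ico_self, prod_empty, mul_one]
  calc e * ∑ m ∈ Ico i L, (∏ k ∈ (range (m+1)).erase i, |x i - x k|⁻¹) *
        ∏ k ∈ Ico m L, (x k + e - x i)⁻¹
      = ∑ m ∈ Ico i L, P * (e * ((∏ k ∈ Ico (i+1) (m+1), |x i - x k|⁻¹) *
          ∏ k ∈ Ico m L, (x k + e - x i)⁻¹)) := by
        rw [Finset.mul_sum]
        refine Finset.sum_congr rfl fun m hm => ?_
        rw [mem_Ico] at hm
        rw [erase_range_split (Nat.lt_succ_of_le hm.1), prod_union (hdisj _)]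
        ring
    _ = P * (A M) := by rw [← Finset.mul_sum, hcore]
    _ = ∏ k ∈ (range L).erase i, |x i - x k|⁻¹ := by
        rw [hAM, erase_range_split hiL, prod_union (hdisj _)]

lemma key2 {e : ℚ} (he : 0 < e) {L i : ℕ} (hiL : i < L) (x : ℕ → ℚ)
    (hx : ∀ ⦃a b : ℕ⦄, a < b → b < L → x a < x b) :
    e * ∑ m ∈ range (i+1), (∏ k ∈ range (m+1), (x i + e - x k)⁻¹) *
        ∏ k ∈ (Ico m L).erase i, |x i - x k|⁻¹
      = ∏ k ∈ (range L).erase i, |x i - x k|⁻¹ := by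
  have hdisj : ∀ m : ℕ, Disjoint (Ico m i) (Ico (i+1) L) := fun m => by
    rw [disjoint_left]; intro k hk hk'; simp only [mem_Ico] at *; omega
  set P : ℚ := ∏ k ∈ Ico (i+1) L, |x i - x k|⁻¹ with hP
  set B : ℕ → ℚ := fun m => (∏ k ∈ range m, (x i + e - x k)⁻¹) *
      ∏ k ∈ Ico m i, |x i - x k|⁻¹ with hB
  have hcore : ∑ m ∈ range (i+1), e * ((∏ k ∈ range (m+1), (x i + e - x k)⁻¹) *
      ∏ k ∈ Ico m i, |x i - x k|⁻¹) = B 0 := by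
    rw [Finset.sum_range_succ]
    have hgi : e * ((∏ k ∈ range (i+1), (x i + e - x k)⁻¹) *
        ∏ k ∈ Ico i i, |x i - x k|⁻¹) = B i := by
      rw [Ico_self, prod_empty, mul_one, Finset.prod_range_succ,
        show x i + e - x i = e by ring]
      simp only [hB]
      rw [Ico_self, prod_empty, mul_one, ← mul_assoc, mul_comm e, mul_assoc,
        mul_inv_cancel₀ (ne_of_gt he), mul_one]
    have hstep : ∀ m ∈ range i, e * ((∏ k ∈ range (m+1), (x i + e - x k)⁻¹) *
        ∏ k ∈ Ico m i, |x i - x k|⁻¹) = B m - B (m+1) := by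
      intro m hm
      rw [mem_range] at hm
      have hupos : 0 < x i - x m := by have := hx hm hiL; linarith
      have hu : |x i - x m| = x i - x m := abs_of_pos hupos
      have hu2 : x i + e - x m = (x i - x m) + e := by ring
      rw [Finset.prod_range_succ, Finset.prod_eq_prod_Ico_succ_bot hm
        (f := fun k => |x i - x k|⁻¹), hu, hu2]
      have hBm : B m = (∏ k ∈ range m, (x i + e - x k)⁻¹) *
          ((x i - x m)⁻¹ * ∏ k ∈ Ico (m+1) i, |x i - x k|⁻¹) := by
        simp only [hB]
        rw [Finset.prod_eq_prod_Ico_succ_bot hm (f := fun k => |x i - x k|⁻¹), hu]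
      have hBm1 : B (m+1) = ((∏ k ∈ range m, (x i + e - x k)⁻¹) * ((x i - x m) + e)⁻¹) *
          ∏ k ∈ Ico (m+1) i, |x i - x k|⁻¹ := by
        simp only [hB]
        rw [Finset.prod_range_succ, hu2]
      rw [hBm, hBm1]
      have := frac_split hupos he
      set u : ℚ := x i - x m
      set C1 : ℚ := ∏ k ∈ range m, (x i + e - x k)⁻¹
      set C2 : ℚ := ∏ k ∈ Ico (m+1) i, |x i - x k|⁻¹
      calc e * (C1 * (u + e)⁻¹ * (u⁻¹ * C2))
          = (e * (u⁻¹ * (u+e)⁻¹)) * (C1 * C2) := by ring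
        _ = (u⁻¹ - (u+e)⁻¹) * (C1 * C2) := by rw [this]
        _ = C1 * (u⁻¹ * C2) - C1 * (u + e)⁻¹ * C2 := by ring
    rw [Finset.sum_congr rfl hstep, Finset.sum_range_sub' B, hgi]
    ring
  have hB0 : B 0 = ∏ k ∈ range i, |x i - x k|⁻¹ := by
    simp only [hB]
    rw [show range 0 = (∅ : Finset ℕ) from rfl, prod_empty, one_mul, range_eq_Ico]
  calc e * ∑ m ∈ range (i+1), (∏ k ∈ range (m+1), (x i + e - x k)⁻¹) *
        ∏ k ∈ (Ico m L).erase i, |x i - x k|⁻¹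
      = ∑ m ∈ range (i+1), (e * ((∏ k ∈ range (m+1), (x i + e - x k)⁻¹) *
          ∏ k ∈ Ico m i, |x i - x k|⁻¹)) * P := by
        rw [Finset.mul_sum]
        refine Finset.sum_congr rfl fun m hm => ?_
        rw [mem_range] at hm
        rw [erase_Ico_split (by omega) hiL, prod_union (hdisj _)]
        ring
    _ = B 0 * P := by rw [← Finset.sum_mul, hcore]
    _ = ∏ k ∈ (range L).erase i, |x i - x k|⁻¹ := by
        rw [hB0, erase_range_split hiL, prod_union (by
          rw [disjoint_left]; intro k hk hk'; simp only [mem_range, mem_Ico] at *; omega)]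

end Aux

section Main

open Finset

theorem pure_mul_koszul (d : List ℤ) (hd : d.Chain' (· < ·)) (hne : d ≠ []) (e : ℤ)
    (he : 0 < e) :
    pureDiagram d * koszulDiagram e
      = (e : ℚ) • ((shuffles (delta d) [e]).map
          (fun σ => pureDiagram (sigmaSeq σ d.headI))).sum := by
  classical
  set L := d.length with hLdef
  have hL : 0 < L := List.length_pos_iff.2 hne
  set f : ℕ → ℤ := fun i => d.getD i 0 with hf
  set x : ℕ → ℚ := fun i => ((d.getD i 0 : ℤ) : ℚ) with hxdef
  have hx : ∀ ⦃a b : ℕ⦄, a < b → b < L → x a < x b := by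
    intro a b hab hbL
    have hp := (List.isChain_iff_pairwise.1 hd)
    have := List.pairwise_iff_get.1 hp ⟨a, by omega⟩ ⟨b, by omega⟩ (by simpa using hab)
    have hint : d.getD a 0 < d.getD b 0 := by
      rwa [List.getD_eq_getElem _ _ (show a < d.length by omega),
        List.getD_eq_getElem _ _ (show b < d.length by omega)]
    simp only [hxdef]
    exact_mod_cast hint
  set c : ℕ → ℚ := fun i => ∏ k ∈ (range L).erase i, |x i - x k|⁻¹ with hc
  -- the inserted degree sequences
  set y : ℕ → ℕ → ℤ := fun m i => if i ≤ m then f i else f (i-1) + e with hy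
  set Cc : ℕ → ℕ → ℚ := fun m i =>
    ∏ k ∈ (range (L+1)).erase i, |(y m i : ℚ) - (y m k : ℚ)|⁻¹ with hCc
  -- Step 1: LHS expansion
  have hLHS : pureDiagram d * koszulDiagram e
      = (∑ i ∈ range L, AddMonoidAlgebra.single (i, f i) (c i))
        + ∑ i ∈ range L, AddMonoidAlgebra.single (i+1, f i + e) (c i) := by
    unfold pureDiagram koszulDiagram
    rw [mul_add, Finset.sum_mul, Finset.sum_mul]
    congr 1
    · refine Finset.sum_congr rfl fun i hi => ?_
      rw [AddMonoidAlgebra.single_mul_single]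
      simp [hc, hf, hxdef, hLdef]
    · refine Finset.sum_congr rfl fun i hi => ?_
      rw [AddMonoidAlgebra.single_mul_single]
      simp [hc, hf, hxdef, hLdef]
  -- Step 2: list sum to Finset sum over insert positions
  have hdl : (delta d).length = L - 1 := by
    simp only [delta, List.length_zipWith, List.length_tail]
    omega
  have hlist : ((shuffles (delta d) [e]).map
        (fun σ => pureDiagram (sigmaSeq σ d.headI))).sum
      = ∑ m ∈ range L, pureDiagram (d.take (m+1) ++ (d.drop m).map (· + e)) := by
    rw [List.Perm.sum_eq ((shuffles_single e (delta d)).map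
      (fun σ => pureDiagram (sigmaSeq σ d.headI)))]
    rw [List.map_map]
    have hr : ((List.range ((delta d).length + 1)).map
        ((fun σ => pureDiagram (sigmaSeq σ d.headI)) ∘ (fun m => (delta d).insertIdx m e))).sum
        = ∑ m ∈ range ((delta d).length + 1),
            pureDiagram (sigmaSeq ((delta d).insertIdx m e) d.headI) := rfl
    rw [hr, show (delta d).length + 1 = L by omega]
    refine Finset.sum_congr rfl fun m hm => ?_
    rw [mem_range] at hm
    congr 1
    have hsd : (delta d).scanl (· + ·) d.headI = d := sigmaSeq_delta d hne
    have := scanl_insertIdx e m (delta d) d.headI (by omega)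
    rw [hsd] at this
    exact this
  -- Step 3: expansion of each inserted pure diagram
  have hgetD : ∀ m, m < L → ∀ i, i < L + 1 →
      (d.take (m+1) ++ (d.drop m).map (· + e)).getD i 0 = y m i := by
    intro m hm i hi
    by_cases him : i ≤ m
    · rw [E_getD_le d e m him (by omega), hy]
      simp [him, hf]
    · rw [E_getD_gt d e m (by omega) (by omega), hy]
      simp [him, hf]
  have hEm : ∀ m ∈ range L, pureDiagram (d.take (m+1) ++ (d.drop m).map (· + e))
      = ∑ i ∈ range (L+1), AddMonoidAlgebra.single (i, y m i) (Cc m i) := by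
    intro m hm
    rw [mem_range] at hm
    unfold pureDiagram
    rw [E_length d e m (by omega)]
    refine Finset.sum_congr (by rw [hLdef]) fun i hi => ?_
    rw [mem_range] at hi
    rw [hgetD m hm i (by omega)]
    congr 1
    rw [hCc]
    refine Finset.prod_congr rfl fun k hk => ?_
    rw [mem_erase, mem_range] at hk
    rw [hgetD m hm k (by omega)]
  -- Step 4: split each inner sum
  have hQ : (0:ℚ) < (e:ℚ) := by exact_mod_cast he
  have hsplit : ∀ m ∈ range L,
      (∑ i ∈ range (L+1), AddMonoidAlgebra.single (i, y m i) (Cc m i))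
        = (∑ i ∈ range (m+1), AddMonoidAlgebra.single (i, f i) (Cc m i))
          + ∑ j ∈ Ico m L, AddMonoidAlgebra.single (j+1, f j + e) (Cc m (j+1)) := by
    intro m hm
    rw [mem_range] at hm
    rw [range_eq_Ico,
      ← Finset.sum_Ico_consecutive _ (Nat.zero_le (m+1)) (show m+1 ≤ L+1 by omega)]
    congr 1
    · rw [← range_eq_Ico]
      refine Finset.sum_congr rfl fun i hi => ?_
      rw [mem_range] at hi
      have : y m i = f i := by simp [hy, show i ≤ m by omega]
      rw [this]
    · refine Finset.sum_nbij' (fun i => i - 1) (fun j => j + 1) ?_ ?_ ?_ ?_ ?_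
      · intro a ha; rw [mem_Ico] at *; omega
      · intro a ha; rw [mem_Ico] at *; omega
      · intro a ha; rw [mem_Ico] at ha; omega
      · intro a ha; omega
      · intro a ha
        rw [mem_Ico] at ha
        have h1 : a - 1 + 1 = a := by omega
        have h2 : y m a = f (a-1) + e := by simp [hy, show ¬ (a ≤ m) by omega]
        rw [h1, h2]
  -- Step 5: swap sums
  have hswap1 : ∑ m ∈ range L, ∑ i ∈ range (m+1), AddMonoidAlgebra.single (i, f i) (Cc m i)
      = ∑ i ∈ range L, AddMonoidAlgebra.single (i, f i) (∑ m ∈ Ico i L, Cc m i) := by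
    rw [Finset.sum_comm' (s' := fun i => Ico i L) (t' := range L) (by
      intro m i
      simp only [mem_range, mem_Ico]
      omega)]
    refine Finset.sum_congr rfl fun i hi => ?_
    exact (map_sum (AddMonoidAlgebra.singleAddHom (i, f i)) _ _).symm
  have hswap2 : ∑ m ∈ range L, ∑ j ∈ Ico m L, AddMonoidAlgebra.single (j+1, f j + e) (Cc m (j+1))
      = ∑ j ∈ range L, AddMonoidAlgebra.single (j+1, f j + e)
          (∑ m ∈ range (j+1), Cc m (j+1)) := by
    rw [Finset.sum_comm' (s' := fun j => range (j+1)) (t' := range L) (by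
      intro m j
      simp only [mem_range, mem_Ico]
      omega)]
    refine Finset.sum_congr rfl fun j hj => ?_
    exact (map_sum (AddMonoidAlgebra.singleAddHom (j+1, f j + e)) _ _).symm
  -- Step 6: coefficient identities
  have hcoef1 : ∀ i ∈ range L, (e:ℚ) * ∑ m ∈ Ico i L, Cc m i = c i := by
    intro i hi
    rw [mem_range] at hi
    have hrw : ∀ m ∈ Ico i L, Cc m i
        = (∏ k ∈ (range (m+1)).erase i, |x i - x k|⁻¹) *
          ∏ k ∈ Ico m L, (x k + (e:ℚ) - x i)⁻¹ := by
      intro m hm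
      rw [mem_Ico] at hm
      have hyi : ((y m i : ℤ) : ℚ) = x i := by
        simp [hy, hm.1, hxdef, hf]
      have hset : (range (L+1)).erase i = (range (m+1)).erase i ∪ Ico (m+1) (L+1) := by
        ext k; simp only [mem_erase, mem_range, mem_union, mem_Ico]; omega
      simp only [hCc]
      rw [hset, prod_union (by
        rw [disjoint_left]; intro k hk hk'
        simp only [mem_erase, mem_range, mem_Ico] at *
        omega)]
      congr 1
      · refine Finset.prod_congr rfl fun k hk => ?_
        rw [mem_erase, mem_range] at hk
        have hyk : ((y m k : ℤ) : ℚ) = x k := by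
          simp [hy, show k ≤ m by omega, hxdef, hf]
        rw [hyi, hyk]
      · refine Finset.prod_nbij' (fun k => k - 1) (fun k => k + 1) ?_ ?_ ?_ ?_ ?_
        · intro a ha; rw [mem_Ico] at *; omega
        · intro a ha; rw [mem_Ico] at *; omega
        · intro a ha; rw [mem_Ico] at ha; omega
        · intro a ha; omega
        · intro a ha
          rw [mem_Ico] at ha
          have hyk : ((y m a : ℤ) : ℚ) = x (a-1) + (e:ℚ) := by
            simp only [hy, show ¬ (a ≤ m) by omega, if_false, hxdef, hf]
            push_cast
            try ring
          rw [hyi, hyk]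
          have hle : x i ≤ x (a-1) := by
            rcases eq_or_lt_of_le (show i ≤ a - 1 by omega) with h | h
            · rw [h]
            · exact le_of_lt (hx h (by omega))
          rw [abs_sub_comm, abs_of_pos (by linarith)]
    rw [Finset.sum_congr rfl hrw]
    exact key1 hQ hi x hx
  have hcoef2 : ∀ j ∈ range L, (e:ℚ) * ∑ m ∈ range (j+1), Cc m (j+1) = c j := by
    intro j hj
    rw [mem_range] at hj
    have hrw : ∀ m ∈ range (j+1), Cc m (j+1)
        = (∏ k ∈ range (m+1), (x j + (e:ℚ) - x k)⁻¹) *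
          ∏ k ∈ (Ico m L).erase j, |x j - x k|⁻¹ := by
      intro m hm
      rw [mem_range] at hm
      have hyj : ((y m (j+1) : ℤ) : ℚ) = x j + (e:ℚ) := by
        simp only [hy, show ¬ (j+1 ≤ m) by omega, if_false, hxdef, hf]
        push_cast
        try simp
      have hset : (range (L+1)).erase (j+1)
          = range (m+1) ∪ (Ico (m+1) (L+1)).erase (j+1) := by
        ext k; simp only [mem_erase, mem_range, mem_union, mem_Ico]; omega
      simp only [hCc]
      rw [hset, prod_union (by
        rw [disjoint_left]; intro k hk hk'
        simp only [mem_erase, mem_range, mem_Ico] at *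
        omega)]
      congr 1
      · refine Finset.prod_congr rfl fun k hk => ?_
        rw [mem_range] at hk
        have hyk : ((y m k : ℤ) : ℚ) = x k := by
          simp [hy, show k ≤ m by omega, hxdef, hf]
        rw [hyj, hyk]
        have hle : x k ≤ x j := by
          rcases eq_or_lt_of_le (show k ≤ j by omega) with h | h
          · rw [h]
          · exact le_of_lt (hx h hj)
        rw [abs_of_pos (by linarith)]
      · refine Finset.prod_nbij' (fun k => k - 1) (fun k => k + 1) ?_ ?_ ?_ ?_ ?_
        · intro a ha
          simp only [mem_erase, mem_Ico] at *
          omega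
        · intro a ha
          simp only [mem_erase, mem_Ico] at *
          omega
        · intro a ha; simp only [mem_erase, mem_Ico] at ha; omega
        · intro a ha; omega
        · intro a ha
          simp only [mem_erase, mem_Ico] at ha
          have hyk : ((y m a : ℤ) : ℚ) = x (a-1) + (e:ℚ) := by
            simp only [hy, show ¬ (a ≤ m) by omega, if_false, hxdef, hf]
            push_cast
            try ring
          rw [hyj, hyk]
          congr 1
          ring
    rw [Finset.sum_congr rfl hrw]
    exact key2 hQ hj x hx
  -- Final assembly
  rw [hLHS, hlist, Finset.sum_congr rfl hEm, Finset.sum_congr rfl hsplit,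
    Finset.sum_add_distrib, hswap1, hswap2, smul_add, Finset.smul_sum, Finset.smul_sum]
  congr 1
  · refine Finset.sum_congr rfl fun i hi => ?_
    rw [show ((e:ℚ) • AddMonoidAlgebra.single (i, f i) (∑ m ∈ Ico i L, Cc m i) : Diagram)
        = AddMonoidAlgebra.single (i, f i) ((e:ℚ) * ∑ m ∈ Ico i L, Cc m i) from
      AddMonoidAlgebra.smul_single' _ _ _, hcoef1 i hi]
  · refine Finset.sum_congr rfl fun j hj => ?_
    rw [show ((e:ℚ) • AddMonoidAlgebra.single (j+1, f j + e) (∑ m ∈ range (j+1), Cc m (j+1)) :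
          Diagram)
        = AddMonoidAlgebra.single (j+1, f j + e)
            ((e:ℚ) * ∑ m ∈ range (j+1), Cc m (j+1)) from
      AddMonoidAlgebra.smul_single' _ _ _, hcoef2 j hj]

end Main

/-- **Corollary.** If `β = ∑_{k=1}^s a_k ⟨d^k⟩` is a finite rational linear
combination of pure diagrams and `e` is a positive integer, then
`β · K(e) = e · ∑_k a_k ∑_{σ ∈ Sh(Δ(d^k),(e))} ⟨Σ(σ, d^k₀)⟩`. -/
theorem sum_pure_mul_koszul (s : ℕ) (a : Fin s → ℚ) (D : Fin s → List ℤ)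
    (hD : ∀ k, (D k).Chain' (· < ·) ∧ D k ≠ []) (e : ℤ) (he : 0 < e) :
    (∑ k : Fin s, a k • pureDiagram (D k)) * koszulDiagram e
      = (e : ℚ) • ∑ k : Fin s, a k •
          ((shuffles (delta (D k)) [e]).map
            (fun σ => pureDiagram (sigmaSeq σ (D k).headI))).sum := by
  rw [Finset.sum_mul, Finset.smul_sum]
  refine Finset.sum_congr rfl fun k _ => ?_
  rw [smul_mul_assoc, pure_mul_koszul (D k) (hD k).1 (hD k).2 e he, smul_comm]
end

section
/- Let e_1, ..., e_n be positive integers and let β be the Betti diagram of a complete intersection of type (e_1,...,e_n), i.e., β_{i,j} = #{ S ⊆ {1,...,n} : |S| = i and ∑_{k∈S} e_k = j }. Then β = (e_1 · e_2 ··· e_n) · ∑_{σ ∈ S_n} ⟨Σ((e_{σ(1)}, e_{σ(2)}, ..., e_{σ(n)}), 0)⟩, where the sum is over all n! permutations σ of {1,...,n}; that is, β = (e_1···e_n) · ∑_σ ⟨(0, e_{σ(1)}, e_{σ(1)}+e_{σ(2)}, ..., e_{σ(1)}+···+e_{σ(n)})⟩. -/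
open scoped BigOperators

section Aux

open Finset Equiv


lemma Ici_zero_fin (m : ℕ) : Finset.Ici (0 : Fin (m+1)) = Finset.univ := by
  ext j; simp [Fin.zero_le]

lemma map_succ_Ici {m : ℕ} (k : Fin m) :
    (Finset.Ici k).map ⟨Fin.succ, Fin.succ_injective m⟩ = Finset.Ici k.succ := by
  ext j
  simp only [Finset.mem_map, Finset.mem_Ici, Function.Embedding.coeFn_mk]
  constructor
  · rintro ⟨i, hi, rfl⟩
    exact Fin.succ_le_succ_iff.mpr hi
  · intro hj
    have hj0 : j ≠ 0 := by
      rintro rfl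
      exact absurd hj (by simp [Fin.lt_iff_val_lt_val, Fin.le_def])
    refine ⟨j.pred hj0, ?_, by simp⟩
    rwa [← Fin.succ_le_succ_iff, Fin.succ_pred]

lemma key_suffix : ∀ (m : ℕ) (a : Fin m → ℚ), (∀ i, 0 < a i) →
    ∑ σ : Equiv.Perm (Fin m), ∏ k : Fin m, (∑ j ∈ Finset.Ici k, a (σ j))⁻¹
      = ∏ i, (a i)⁻¹ := by
  intro m
  induction m with
  | zero => intro a ha; simp
  | succ m ih =>
    intro a ha
    have hS : (0:ℚ) < ∑ i, a i := Finset.sum_pos (fun i _ => ha i) ⟨0, Finset.mem_univ 0⟩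
    rw [← Equiv.sum_comp (Equiv.Perm.decomposeFin (n := m)).symm]
    rw [Fintype.sum_prod_type]
    have hterm : ∀ (p : Fin (m+1)) (τ : Equiv.Perm (Fin m)),
        ∏ k : Fin (m+1), (∑ j ∈ Finset.Ici k, a ((Equiv.Perm.decomposeFin.symm (p, τ)) j))⁻¹
        = (∑ i, a i)⁻¹ * ∏ k : Fin m, (∑ j ∈ Finset.Ici k, a (Equiv.swap 0 p (τ j).succ))⁻¹ := by
      intro p τ
      rw [Fin.prod_univ_succ]
      congr 1
      · rw [Ici_zero_fin]
        rw [Equiv.sum_comp (Equiv.Perm.decomposeFin.symm (p, τ)) a]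
      · refine Finset.prod_congr rfl fun k _ => ?_
        congr 1
        rw [← map_succ_Ici, Finset.sum_map]
        refine Finset.sum_congr rfl fun i _ => ?_
        simp [Equiv.Perm.decomposeFin_symm_apply_succ]
    have hinner : ∀ p : Fin (m+1),
        ∑ τ : Equiv.Perm (Fin m), ∏ k : Fin m,
          (∑ j ∈ Finset.Ici k, a (Equiv.swap 0 p (τ j).succ))⁻¹
        = a p * ∏ i, (a i)⁻¹ := by
      intro p
      rw [ih (fun i => a (Equiv.swap 0 p i.succ)) (fun i => ha _)]
      have h1 : ∏ i : Fin (m+1), (a (Equiv.swap 0 p i))⁻¹ = ∏ i, (a i)⁻¹ :=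
        Equiv.prod_comp (Equiv.swap 0 p) (fun i => (a i)⁻¹)
      rw [Fin.prod_univ_succ, Equiv.swap_apply_left] at h1
      rw [← h1, ← mul_assoc, mul_inv_cancel₀ (ha p).ne', one_mul]
    calc ∑ p : Fin (m+1), ∑ τ : Equiv.Perm (Fin m),
          ∏ k : Fin (m+1), (∑ j ∈ Finset.Ici k, a ((Equiv.Perm.decomposeFin.symm (p, τ)) j))⁻¹
        = ∑ p : Fin (m+1), (∑ i, a i)⁻¹ * (a p * ∏ i, (a i)⁻¹) := by
          refine Finset.sum_congr rfl fun p _ => ?_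
          rw [← hinner p, Finset.mul_sum]
          exact Finset.sum_congr rfl fun τ _ => hterm p τ
      _ = ∏ i, (a i)⁻¹ := by
          rw [← Finset.mul_sum, ← Finset.sum_mul, ← mul_assoc, inv_mul_cancel₀ hS.ne', one_mul]


lemma sum_Iic_rev {m : ℕ} (k : Fin m) (g : Fin m → ℚ) :
    ∑ j ∈ Finset.Iic k, g j.rev = ∑ j ∈ Finset.Ici k.rev, g j := by
  refine Finset.sum_nbij' (fun j => j.rev) (fun j => j.rev) ?_ ?_ ?_ ?_ ?_
  · simp [Fin.rev_le_rev]
  · intro a ha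
    simp only [Finset.mem_Ici] at ha
    simp only [Finset.mem_Iic]
    have := Fin.rev_le_rev.mpr ha
    rwa [Fin.rev_rev] at this
  · simp
  · simp
  · simp

lemma key_prefix (m : ℕ) (a : Fin m → ℚ) (ha : ∀ i, 0 < a i)
    (hsuf : ∑ σ : Equiv.Perm (Fin m), ∏ k : Fin m, (∑ j ∈ Finset.Ici k, a (σ j))⁻¹
      = ∏ i, (a i)⁻¹) :
    ∑ σ : Equiv.Perm (Fin m), ∏ k : Fin m, (∑ j ∈ Finset.Iic k, a (σ j))⁻¹
      = ∏ i, (a i)⁻¹ := by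
  rw [← hsuf]
  refine Fintype.sum_equiv (Equiv.mulRight Fin.revPerm) _ _ fun σ => ?_
  calc ∏ k : Fin m, (∑ j ∈ Finset.Iic k, a (σ j))⁻¹
      = ∏ k : Fin m, (∑ j ∈ Finset.Ici k.rev, a (σ j.rev))⁻¹ := by
        refine Finset.prod_congr rfl fun k _ => ?_
        congr 1
        rw [← sum_Iic_rev k (fun j => a (σ j.rev))]
        exact Finset.sum_congr rfl fun j _ => by rw [Fin.rev_rev]
    _ = ∏ k : Fin m, (∑ j ∈ Finset.Ici k, a (σ j.rev))⁻¹ :=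
        Equiv.prod_comp (Fin.revPerm : Equiv.Perm (Fin m))
          (fun k => (∑ j ∈ Finset.Ici k, a (σ j.rev))⁻¹)
    _ = ∏ k : Fin m, (∑ j ∈ Finset.Ici k, a (((Equiv.mulRight Fin.revPerm) σ) j))⁻¹ := rfl

lemma scanl_getD (l : List ℤ) (b : ℤ) (k : ℕ) (hk : k ≤ l.length) :
    (l.scanl (· + ·) b).getD k 0 = b + (l.take k).sum := by
  induction l generalizing b k with
  | nil =>
    have : k = 0 := Nat.le_zero.mp hk
    subst this; simp
  | cons a l ih =>
    rw [List.scanl_cons]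
    cases k with
    | zero => simp
    | succ k =>
      rw [List.getD_cons_succ, List.take_succ_cons, List.sum_cons,
        ih (b + a) k (by simpa using hk)]
      ring

lemma pureDiagram_apply (d : List ℤ) (i : ℕ) (j : ℤ) :
    (pureDiagram d).coeff (i, j) = if i < d.length ∧ d.getD i 0 = j then
      ∏ k ∈ (Finset.range d.length).erase i, |(d.getD i 0 : ℚ) - (d.getD k 0 : ℚ)|⁻¹ else 0 := by
  rw [pureDiagram, AddMonoidAlgebra.coeff_sum, Finsupp.finset_sum_apply]
  by_cases hi : i < d.length
  · rw [Finset.sum_eq_single i]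
    · rw [AddMonoidAlgebra.coeff_single_apply]
      by_cases hj : d.getD i 0 = j
      · simp [hj, hi]
      · rw [if_neg (fun h => hj (congrArg Prod.snd h)), if_neg (fun h => hj h.2)]
    · intro k hk hki
      rw [AddMonoidAlgebra.coeff_single_apply, if_neg (by simp [hki])]
    · intro h
      exact absurd (Finset.mem_range.mpr hi) h
  · rw [if_neg (by simp [hi]), Finset.sum_eq_zero]
    intro k hk
    rw [AddMonoidAlgebra.coeff_single_apply, if_neg]
    intro h
    obtain ⟨rfl, -⟩ := Prod.mk.injEq .. ▸ h
    exact hi (Finset.mem_range.mp hk)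


def psum (n : ℕ) (e : Fin n → ℤ) (σ : Equiv.Perm (Fin n)) (k : ℕ) : ℤ :=
  ∑ j ∈ Finset.univ.filter (fun j : Fin n => (j : ℕ) < k), e (σ j)

lemma psum_sub (n : ℕ) (e : Fin n → ℤ) (σ : Equiv.Perm (Fin n)) {k k' : ℕ}
    (h : k ≤ k') :
    psum n e σ k' - psum n e σ k
      = ∑ j ∈ Finset.univ.filter (fun j : Fin n => k ≤ (j : ℕ) ∧ (j : ℕ) < k'), e (σ j) := by
  have hsub : (Finset.univ.filter (fun j : Fin n => (j : ℕ) < k))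
      ⊆ Finset.univ.filter (fun j : Fin n => (j : ℕ) < k') := by
    intro j hj
    simp only [Finset.mem_filter, Finset.mem_univ, true_and] at hj ⊢
    omega
  unfold psum
  rw [← Finset.sum_sdiff_eq_sub hsub]
  congr 1
  ext j
  simp only [Finset.mem_sdiff, Finset.mem_filter, Finset.mem_univ, true_and]
  omega

lemma psum_lt (n : ℕ) (e : Fin n → ℤ) (he : ∀ t, 0 < e t) (σ : Equiv.Perm (Fin n))
    {k k' : ℕ} (h : k < k') (h' : k' ≤ n) : psum n e σ k < psum n e σ k' := by
  have := psum_sub n e σ (le_of_lt h)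
  have hpos : 0 < ∑ j ∈ Finset.univ.filter (fun j : Fin n => k ≤ (j : ℕ) ∧ (j : ℕ) < k'), e (σ j) := by
    refine Finset.sum_pos (fun j _ => he _) ⟨⟨k, by omega⟩, ?_⟩
    simp only [Finset.mem_filter, Finset.mem_univ, true_and]
    omega
  omega

lemma blockcard (n i : ℕ) (hin : i ≤ n) :
    (Finset.univ.filter fun j : Fin n => (j : ℕ) < i).card = i := by
  rw [Finset.card_eq_of_bijective (fun k hk => ⟨k, lt_of_lt_of_le hk hin⟩)]
  · intro a ha
    simp only [Finset.mem_filter, Finset.mem_univ, true_and] at ha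
    exact ⟨(a : ℕ), ha, Fin.ext rfl⟩
  · intro k hk
    simp only [Finset.mem_filter, Finset.mem_univ, true_and]
    exact hk
  · intro k l hk hl hkl
    exact congrArg Fin.val hkl

lemma fiber_sum (n : ℕ) (e : Fin n → ℤ) (he : ∀ t, 0 < e t) (i : ℕ) (hin : i ≤ n)
    (S : Finset (Fin n)) (hS : S.card = i) :
    ∑ σ ∈ Finset.univ.filter (fun σ : Equiv.Perm (Fin n) =>
        Finset.image σ (Finset.univ.filter fun j : Fin n => (j : ℕ) < i) = S),
      ((∏ k ∈ Finset.range i, ((psum n e σ i - psum n e σ k : ℤ) : ℚ)⁻¹) *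
        ∏ k ∈ Finset.Ico (i+1) (n+1), ((psum n e σ k - psum n e σ i : ℤ) : ℚ)⁻¹)
      = ∏ t, ((e t : ℚ))⁻¹ := by
  classical
  have hSc : Sᶜ.card = n - i := by
    rw [Finset.card_compl, hS, Fintype.card_fin]
  set uS : Fin i ≃o {x // x ∈ S} := S.orderIsoOfFin hS with huS
  set uC : Fin (n - i) ≃o {x // x ∈ Sᶜ} := Sᶜ.orderIsoOfFin hSc with huC
  have hni : i + (n - i) = n := Nat.add_sub_cancel' hin
  set A : Fin n ≃ (Fin i ⊕ Fin (n - i)) := (finCongr hni.symm).trans finSumFinEquiv.symm with hA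
  set B : (Fin i ⊕ Fin (n - i)) ≃ Fin n :=
    (Equiv.sumCongr uS.toEquiv
        (uC.toEquiv.trans (Equiv.subtypeEquivRight (fun x => Finset.mem_compl)))).trans
      (Equiv.sumCompl (· ∈ S)) with hB
  -- values of A
  have hA1 : ∀ (j : Fin n) (h : (j : ℕ) < i), A j = Sum.inl ⟨j, h⟩ := by
    intro j h
    have : (finCongr hni.symm) j = Fin.castAdd (n - i) ⟨j, h⟩ := by
      apply Fin.ext; simp
    rw [hA]
    simp only [Equiv.trans_apply, this, finSumFinEquiv_symm_apply_castAdd]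
  have hA2 : ∀ (j : Fin n) (h : i ≤ (j : ℕ)), A j = Sum.inr ⟨(j : ℕ) - i, by omega⟩ := by
    intro j h
    have : (finCongr hni.symm) j = Fin.natAdd i ⟨(j : ℕ) - i, by omega⟩ := by
      apply Fin.ext; simp [Fin.natAdd]; omega
    rw [hA]
    simp only [Equiv.trans_apply, this, finSumFinEquiv_symm_apply_natAdd]
  -- values of B
  have hB1 : ∀ x : Fin i, B (Sum.inl x) = ↑(uS x) := by
    intro x; rw [hB]; simp
  have hB2 : ∀ y : Fin (n - i), B (Sum.inr y) = ↑(uC y) := by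
    intro y; rw [hB]; simp
  have hB1mem : ∀ x : Fin i, (B (Sum.inl x)) ∈ S := by
    intro x; rw [hB1]; exact (uS x).2
  have hB2mem : ∀ y : Fin (n - i), (B (Sum.inr y)) ∉ S := by
    intro y; rw [hB2]
    exact Finset.mem_compl.mp (uC y).2
  have hBsymm : ∀ (t : Fin n), t ∈ S → ∃ x : Fin i, B.symm t = Sum.inl x := by
    intro t ht
    refine ⟨uS.symm ⟨t, ht⟩, ?_⟩
    rw [Equiv.symm_apply_eq, hB1]
    simp
  -- Ψ
  set Ψ : Equiv.Perm (Fin i) × Equiv.Perm (Fin (n - i)) → Equiv.Perm (Fin n) :=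
    fun p => (A.trans ((Equiv.sumCongr p.1 p.2).trans B)) with hΨ
  have hΨ1 : ∀ (p) (j : Fin n) (h : (j : ℕ) < i), Ψ p j = ↑(uS (p.1 ⟨j, h⟩)) := by
    intro p j h
    rw [hΨ]
    simp only [Equiv.trans_apply, hA1 j h, Equiv.sumCongr_apply, Sum.map_inl, hB1]
  have hΨ2 : ∀ (p) (j : Fin n) (h : i ≤ (j : ℕ)), Ψ p j = ↑(uC (p.2 ⟨(j : ℕ) - i, by omega⟩)) := by
    intro p j h
    rw [hΨ]
    simp only [Equiv.trans_apply, hA2 j h, Equiv.sumCongr_apply, Sum.map_inr, hB2]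
  -- block facts
  have hblockcard : (Finset.univ.filter fun j : Fin n => (j : ℕ) < i).card = i := by
    rw [Finset.card_eq_of_bijective (fun k hk => ⟨k, lt_of_lt_of_le hk hin⟩)]
    · intro a ha
      simp only [Finset.mem_filter, Finset.mem_univ, true_and] at ha
      exact ⟨(a : ℕ), ha, Fin.ext rfl⟩
    · intro k hk
      simp only [Finset.mem_filter, Finset.mem_univ, true_and]
      exact hk
    · intro k l hk hl hkl
      exact congrArg Fin.val hkl
  -- Ψ lands in the fiber
  have hmaps : ∀ p, Finset.image (Ψ p) (Finset.univ.filter fun j : Fin n => (j : ℕ) < i) = S := by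
    intro p
    have hsub : Finset.image (Ψ p) (Finset.univ.filter fun j : Fin n => (j : ℕ) < i) ⊆ S := by
      intro t ht
      obtain ⟨j, hj, rfl⟩ := Finset.mem_image.mp ht
      simp only [Finset.mem_filter, Finset.mem_univ, true_and] at hj
      rw [hΨ1 p j hj]
      exact (uS (p.1 ⟨j, hj⟩)).2
    refine (Finset.eq_of_subset_of_card_le hsub ?_)
    rw [Finset.card_image_of_injective _ (Equiv.injective _), hblockcard, hS]
  -- injectivity of Ψ
  have hinj : Function.Injective Ψ := by
    intro p q hpq
    have h2 : Equiv.sumCongr p.1 p.2 = Equiv.sumCongr q.1 q.2 := by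
      ext x
      have := congrArg (fun σ : Equiv.Perm (Fin n) => B.symm (σ (A.symm x))) hpq
      simpa [hΨ] using this
    have h3 := Equiv.Perm.sumCongrHom_injective (α := Fin i) (β := Fin (n - i))
      (by rw [Equiv.Perm.sumCongrHom_apply, Equiv.Perm.sumCongrHom_apply]; exact h2 :
        Equiv.Perm.sumCongrHom (Fin i) (Fin (n - i)) p = Equiv.Perm.sumCongrHom _ _ q)
    exact h3
  -- surjectivity of Ψ onto the fiber
  have hsurj : ∀ σ : Equiv.Perm (Fin n),
      Finset.image σ (Finset.univ.filter fun j : Fin n => (j : ℕ) < i) = S → ∃ p, Ψ p = σ := by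
    intro σ hσ
    set g : Equiv.Perm (Fin i ⊕ Fin (n - i)) := (A.symm.trans (σ.trans B.symm)) with hg
    have hmapsTo : Set.MapsTo g (Set.range Sum.inl) (Set.range Sum.inl) := by
      rintro _ ⟨x, rfl⟩
      have hjx : A.symm (Sum.inl x) = ⟨(x : ℕ), lt_of_lt_of_le x.2 hin⟩ := by
        rw [Equiv.symm_apply_eq, hA1 _ x.2]
      have hmem : σ (A.symm (Sum.inl x)) ∈ S := by
        rw [← hσ]
        refine Finset.mem_image.mpr ⟨A.symm (Sum.inl x), ?_, rfl⟩
        simp only [Finset.mem_filter, Finset.mem_univ, true_and, hjx]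
        exact x.2
      obtain ⟨y, hy⟩ := hBsymm _ hmem
      exact ⟨y, by simp [hg, hy]⟩
    obtain ⟨⟨τ, ρ⟩, hτρ⟩ := Equiv.Perm.mem_sumCongrHom_range_of_perm_mapsTo_inl hmapsTo
    refine ⟨(τ, ρ), ?_⟩
    ext j
    have : Equiv.sumCongr τ ρ = g := by
      rw [← hτρ]; rfl
    rw [hΨ]
    simp [this, hg]
  -- the two key products
  set a : Fin i → ℚ := fun x => (e ↑(uS x) : ℚ) with ha
  set b : Fin (n - i) → ℚ := fun y => (e ↑(uC y) : ℚ) with hb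
  have hapos : ∀ x, 0 < a x := fun x => by show (0:ℚ) < ((e ↑(uS x) : ℤ) : ℚ); exact_mod_cast he _
  have hbpos : ∀ y, 0 < b y := fun y => by show (0:ℚ) < ((e ↑(uC y) : ℤ) : ℚ); exact_mod_cast he _
  -- weight of Ψ p
  have hweight : ∀ p,
      ((∏ k ∈ Finset.range i, ((psum n e (Ψ p) i - psum n e (Ψ p) k : ℤ) : ℚ)⁻¹) *
        ∏ k ∈ Finset.Ico (i+1) (n+1), ((psum n e (Ψ p) k - psum n e (Ψ p) i : ℤ) : ℚ)⁻¹)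
      = (∏ k : Fin i, (∑ x ∈ Finset.Ici k, a (p.1 x))⁻¹) *
        (∏ k : Fin (n - i), (∑ y ∈ Finset.Iic k, b (p.2 y))⁻¹) := by
    intro p
    congr 1
    · rw [← Fin.prod_univ_eq_prod_range
        (fun k => ((psum n e (Ψ p) i - psum n e (Ψ p) k : ℤ) : ℚ)⁻¹) i]
      refine Finset.prod_congr rfl fun k _ => ?_
      congr 1
      rw [psum_sub n e (Ψ p) (le_of_lt k.2)]
      rw [show ((∑ j ∈ Finset.univ.filter (fun j : Fin n => (k : ℕ) ≤ (j : ℕ) ∧ (j : ℕ) < i),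
          e ((Ψ p) j) : ℤ) : ℚ) = ∑ j ∈ Finset.univ.filter
            (fun j : Fin n => (k : ℕ) ≤ (j : ℕ) ∧ (j : ℕ) < i), (e ((Ψ p) j) : ℚ) by
        push_cast; ring]
      refine Finset.sum_nbij'
        (fun j : Fin n => if h : (j : ℕ) < i then (⟨(j : ℕ), h⟩ : Fin i) else k)
        (fun x : Fin i => (⟨(x : ℕ), lt_of_lt_of_le x.2 hin⟩ : Fin n)) ?_ ?_ ?_ ?_ ?_
      · intro j hj
        simp only [Finset.mem_filter, Finset.mem_univ, true_and] at hj
        rw [dif_pos hj.2]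
        exact Finset.mem_Ici.mpr (by simp only [Fin.le_def]; exact hj.1)
      · intro x hx
        simp only [Finset.mem_Ici, Fin.le_def] at hx
        simp only [Finset.mem_filter, Finset.mem_univ, true_and]
        exact ⟨hx, x.2⟩
      · intro j hj
        simp only [Finset.mem_filter, Finset.mem_univ, true_and] at hj
        rw [dif_pos hj.2]
      · intro x hx
        dsimp only
        rw [dif_pos x.2]
      · intro j hj
        simp only [Finset.mem_filter, Finset.mem_univ, true_and] at hj
        rw [dif_pos hj.2, hΨ1 p j hj.2]
    · rw [Finset.prod_Ico_eq_prod_range]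
      rw [show n + 1 - (i + 1) = n - i from by omega]
      rw [← Fin.prod_univ_eq_prod_range
        (fun m => ((psum n e (Ψ p) (i + 1 + m) - psum n e (Ψ p) i : ℤ) : ℚ)⁻¹) (n - i)]
      refine Finset.prod_congr rfl fun m _ => ?_
      congr 1
      rw [psum_sub n e (Ψ p) (by omega : i ≤ i + 1 + (m : ℕ))]
      rw [show ((∑ j ∈ Finset.univ.filter
          (fun j : Fin n => i ≤ (j : ℕ) ∧ (j : ℕ) < i + 1 + (m : ℕ)),
          e ((Ψ p) j) : ℤ) : ℚ) = ∑ j ∈ Finset.univ.filter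
            (fun j : Fin n => i ≤ (j : ℕ) ∧ (j : ℕ) < i + 1 + (m : ℕ)), (e ((Ψ p) j) : ℚ) by
        push_cast; ring]
      refine Finset.sum_nbij'
        (fun j : Fin n => if h : i ≤ (j : ℕ) then (⟨(j : ℕ) - i, by omega⟩ : Fin (n - i)) else m)
        (fun y : Fin (n - i) => (⟨i + (y : ℕ), by omega⟩ : Fin n)) ?_ ?_ ?_ ?_ ?_
      · intro j hj
        simp only [Finset.mem_filter, Finset.mem_univ, true_and] at hj
        rw [dif_pos hj.1]
        exact Finset.mem_Iic.mpr (by simp only [Fin.le_def]; omega)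
      · intro y hy
        simp only [Finset.mem_Iic, Fin.le_def] at hy
        simp only [Finset.mem_filter, Finset.mem_univ, true_and]
        omega
      · intro j hj
        simp only [Finset.mem_filter, Finset.mem_univ, true_and] at hj
        rw [dif_pos hj.1]
        apply Fin.ext
        simp only
        omega
      · intro y hy
        dsimp only
        rw [dif_pos (by omega : i ≤ i + (y : ℕ))]
        apply Fin.ext
        simp
      · intro j hj
        simp only [Finset.mem_filter, Finset.mem_univ, true_and] at hj
        rw [dif_pos hj.1, hΨ2 p j hj.1]
  -- assembly
  calc ∑ σ ∈ Finset.univ.filter (fun σ : Equiv.Perm (Fin n) =>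
        Finset.image σ (Finset.univ.filter fun j : Fin n => (j : ℕ) < i) = S),
      ((∏ k ∈ Finset.range i, ((psum n e σ i - psum n e σ k : ℤ) : ℚ)⁻¹) *
        ∏ k ∈ Finset.Ico (i+1) (n+1), ((psum n e σ k - psum n e σ i : ℤ) : ℚ)⁻¹)
      = ∑ p : Equiv.Perm (Fin i) × Equiv.Perm (Fin (n - i)),
          (∏ k : Fin i, (∑ x ∈ Finset.Ici k, a (p.1 x))⁻¹) *
          (∏ k : Fin (n - i), (∑ y ∈ Finset.Iic k, b (p.2 y))⁻¹) := by
        refine (Finset.sum_bij (fun p _ => Ψ p) ?_ ?_ ?_ ?_).symm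
        · intro p _
          exact Finset.mem_filter.mpr ⟨Finset.mem_univ _, hmaps p⟩
        · intro p _ q _ h
          exact hinj h
        · intro σ hσ
          obtain ⟨p, hp⟩ := hsurj σ (Finset.mem_filter.mp hσ).2
          exact ⟨p, Finset.mem_univ _, hp⟩
        · intro p _
          exact (hweight p).symm
    _ = (∑ τ : Equiv.Perm (Fin i), ∏ k : Fin i, (∑ x ∈ Finset.Ici k, a (τ x))⁻¹) *
        (∑ ρ : Equiv.Perm (Fin (n - i)), ∏ k : Fin (n - i), (∑ y ∈ Finset.Iic k, b (ρ y))⁻¹) := by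
        rw [Finset.sum_mul_sum]
        rw [Fintype.sum_prod_type]
    _ = (∏ x : Fin i, (a x)⁻¹) * (∏ y : Fin (n - i), (b y)⁻¹) := by
        rw [key_suffix i a hapos, key_prefix (n - i) b hbpos (key_suffix (n - i) b hbpos)]
    _ = (∏ t ∈ S, ((e t : ℚ))⁻¹) * (∏ t ∈ Sᶜ, ((e t : ℚ))⁻¹) := by
        congr 1
        · rw [← Finset.prod_coe_sort S (fun t => ((e t : ℚ))⁻¹)]
          exact Equiv.prod_comp uS.toEquiv (fun s : {x // x ∈ S} => ((e ↑s : ℚ))⁻¹)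
        · rw [← Finset.prod_coe_sort Sᶜ (fun t => ((e t : ℚ))⁻¹)]
          exact Equiv.prod_comp uC.toEquiv (fun s : {x // x ∈ Sᶜ} => ((e ↑s : ℚ))⁻¹)
    _ = ∏ t, ((e t : ℚ))⁻¹ := Finset.prod_mul_prod_compl S _

end Aux

/-- **Corollary.** Let `e₁, …, e_n` be positive integers and let `β` be the
Betti diagram of a complete intersection of type `(e₁,…,e_n)`, i.e.
`β_{i,j} = #{S ⊆ {1,…,n} : |S| = i and ∑_{k∈S} e_k = j}`.  Then
`β = (e₁·e₂···e_n) · ∑_{σ ∈ S_n} ⟨(0, e_{σ(1)}, e_{σ(1)}+e_{σ(2)}, …,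
e_{σ(1)}+···+e_{σ(n)})⟩`, the sum over all `n!` permutations of `{1,…,n}`. -/
theorem betti_ci_eq_mult_smul_sum_perms (n : ℕ) (e : Fin n → ℤ)
    (he : ∀ i, 0 < e i) (β : Diagram)
    (hβ : ∀ (i : ℕ) (j : ℤ), β.coeff (i, j)
        = ((Finset.univ : Finset (Finset (Fin n))).filter
            (fun S => S.card = i ∧ ∑ k ∈ S, e k = j)).card) :
    β = (∏ i : Fin n, (e i : ℚ)) •
          ∑ σ : Equiv.Perm (Fin n),
            pureDiagram ((List.ofFn (fun i => e (σ i))).scanl (· + ·) 0) := by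
  classical
  ext ⟨i, j⟩
  rw [hβ i j, AddMonoidAlgebra.coeff_smul, Finsupp.smul_apply, AddMonoidAlgebra.coeff_sum, Finsupp.finset_sum_apply, smul_eq_mul]
  have hlen : ∀ σ : Equiv.Perm (Fin n),
      ((List.ofFn (fun i => e (σ i))).scanl (· + ·) 0).length = n + 1 := by
    intro σ; rw [List.length_scanl, List.length_ofFn]
  have hgetD : ∀ (σ : Equiv.Perm (Fin n)) (k : ℕ), k ≤ n →
      ((List.ofFn (fun i => e (σ i))).scanl (· + ·) 0).getD k 0 = psum n e σ k := by
    intro σ k hk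
    rw [scanl_getD _ _ k (by rw [List.length_ofFn]; omega), List.sum_take_ofFn]
    simp [psum]
  have hpd : ∀ σ : Equiv.Perm (Fin n),
      (pureDiagram ((List.ofFn (fun i => e (σ i))).scanl (· + ·) 0)).coeff (i, j)
      = if i < n + 1 ∧ psum n e σ i = j then
          ∏ k ∈ (Finset.range (n+1)).erase i, |((psum n e σ i : ℤ) : ℚ) - ((psum n e σ k : ℤ) : ℚ)|⁻¹
        else 0 := by
    intro σ
    rw [pureDiagram_apply, hlen σ]
    by_cases hi : i < n + 1
    · rw [hgetD σ i (by omega)]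
      by_cases hij : psum n e σ i = j
      · rw [if_pos ⟨hi, hij⟩, if_pos ⟨hi, hij⟩]
        refine Finset.prod_congr rfl fun k hk => ?_
        have hk' : k ≤ n := by
          have := Finset.mem_range.mp (Finset.mem_of_mem_erase hk); omega
        rw [hgetD σ k hk']
      · rw [if_neg (by tauto), if_neg (by tauto)]
    · rw [if_neg (by tauto), if_neg (by tauto)]
  rw [Finset.sum_congr rfl fun σ _ => hpd σ]
  by_cases hi : i < n + 1
  swap
  · rw [Finset.sum_eq_zero (fun σ _ => by rw [if_neg (by tauto)]), mul_zero]
    rw [Finset.filter_false_of_mem, Finset.card_empty, Nat.cast_zero]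
    intro S _
    intro ⟨hc, _⟩
    have h2 : S.card ≤ n := by simpa using S.card_le_univ
    omega
  · have hin : i ≤ n := by omega
    -- remove the `i < n+1` from conditions and replace weights by split products
    have hW : ∀ σ : Equiv.Perm (Fin n),
        (∏ k ∈ (Finset.range (n+1)).erase i,
          |((psum n e σ i : ℤ) : ℚ) - ((psum n e σ k : ℤ) : ℚ)|⁻¹)
        = (∏ k ∈ Finset.range i, ((psum n e σ i - psum n e σ k : ℤ) : ℚ)⁻¹) *
          ∏ k ∈ Finset.Ico (i+1) (n+1), ((psum n e σ k - psum n e σ i : ℤ) : ℚ)⁻¹ := by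
      intro σ
      have hsplit : (Finset.range (n+1)).erase i
          = Finset.range i ∪ Finset.Ico (i+1) (n+1) := by
        ext k
        simp only [Finset.mem_erase, Finset.mem_range, Finset.mem_union, Finset.mem_Ico]
        omega
      have hdisj : Disjoint (Finset.range i) (Finset.Ico (i+1) (n+1)) := by
        rw [Finset.disjoint_left]
        intro k hk hk'
        simp only [Finset.mem_range] at hk
        simp only [Finset.mem_Ico] at hk'
        omega
      rw [hsplit, Finset.prod_union hdisj]
      congr 1
      · refine Finset.prod_congr rfl fun k hk => ?_
        have hk' : k < i := Finset.mem_range.mp hk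
        have hlt := psum_lt n e he σ hk' hin
        rw [abs_of_pos (sub_pos.mpr (by exact_mod_cast hlt) :
          (0:ℚ) < ((psum n e σ i : ℤ) : ℚ) - ((psum n e σ k : ℤ) : ℚ))]
        congr 1
        push_cast
        ring
      · refine Finset.prod_congr rfl fun k hk => ?_
        obtain ⟨hk1, hk2⟩ := Finset.mem_Ico.mp hk
        have hlt := psum_lt n e he σ (by omega : i < k) (by omega)
        rw [abs_sub_comm, abs_of_pos (sub_pos.mpr (by exact_mod_cast hlt) :
          (0:ℚ) < ((psum n e σ k : ℤ) : ℚ) - ((psum n e σ i : ℤ) : ℚ))]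
        congr 1
        push_cast
        ring
    have hsimp : ∀ σ : Equiv.Perm (Fin n),
        (if i < n + 1 ∧ psum n e σ i = j then
          ∏ k ∈ (Finset.range (n+1)).erase i,
            |((psum n e σ i : ℤ) : ℚ) - ((psum n e σ k : ℤ) : ℚ)|⁻¹ else 0)
        = if psum n e σ i = j then
            (∏ k ∈ Finset.range i, ((psum n e σ i - psum n e σ k : ℤ) : ℚ)⁻¹) *
              ∏ k ∈ Finset.Ico (i+1) (n+1), ((psum n e σ k - psum n e σ i : ℤ) : ℚ)⁻¹
          else 0 := by
      intro σ
      by_cases hij : psum n e σ i = j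
      · rw [if_pos ⟨hi, hij⟩, if_pos hij, hW σ]
      · rw [if_neg (by tauto), if_neg hij]
    rw [Finset.sum_congr rfl fun σ _ => hsimp σ]
    -- fiberwise
    rw [← Finset.sum_fiberwise_of_maps_to
      (g := fun σ : Equiv.Perm (Fin n) =>
        Finset.image σ (Finset.univ.filter fun j : Fin n => (j : ℕ) < i))
      (t := (Finset.univ : Finset (Finset (Fin n)))) (fun σ _ => Finset.mem_univ _)]
    have hinner : ∀ S : Finset (Fin n),
        (∑ σ ∈ Finset.univ.filter (fun σ : Equiv.Perm (Fin n) =>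
            Finset.image σ (Finset.univ.filter fun j : Fin n => (j : ℕ) < i) = S),
          if psum n e σ i = j then
            (∏ k ∈ Finset.range i, ((psum n e σ i - psum n e σ k : ℤ) : ℚ)⁻¹) *
              ∏ k ∈ Finset.Ico (i+1) (n+1), ((psum n e σ k - psum n e σ i : ℤ) : ℚ)⁻¹
          else 0)
        = if S.card = i ∧ ∑ t ∈ S, e t = j then ∏ t, ((e t : ℚ))⁻¹ else 0 := by
      intro S
      by_cases hcard : S.card = i
      · have hval : ∀ σ ∈ Finset.univ.filter (fun σ : Equiv.Perm (Fin n) =>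
            Finset.image σ (Finset.univ.filter fun j : Fin n => (j : ℕ) < i) = S),
            psum n e σ i = ∑ t ∈ S, e t := by
          intro σ hσ
          have hσ' := (Finset.mem_filter.mp hσ).2
          rw [psum, ← hσ', Finset.sum_image (fun x _ y _ h => σ.injective h)]
        by_cases hj' : ∑ t ∈ S, e t = j
        · rw [if_pos ⟨hcard, hj'⟩, ← fiber_sum n e he i hin S hcard]
          refine Finset.sum_congr rfl fun σ hσ => ?_
          rw [if_pos (by rw [hval σ hσ, hj'])]
        · rw [if_neg (by tauto), Finset.sum_eq_zero]
          intro σ hσ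
          rw [if_neg (by rw [hval σ hσ]; exact hj')]
      · rw [if_neg (by tauto), Finset.sum_eq_zero]
        intro σ hσ
        exfalso
        apply hcard
        have hσ' := (Finset.mem_filter.mp hσ).2
        rw [← hσ', Finset.card_image_of_injective _ σ.injective, blockcard n i hin]
      -- done inner
    rw [Finset.sum_congr rfl fun S _ => hinner S]
    rw [Finset.sum_ite, Finset.sum_const_zero, add_zero, Finset.sum_const, nsmul_eq_mul]
    rw [← mul_assoc, mul_comm (∏ t : Fin n, ((e t : ℚ))) _, mul_assoc]
    rw [← Finset.prod_mul_distrib]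
    rw [Finset.prod_congr rfl fun t _ => mul_inv_cancel₀
      (by exact_mod_cast (he t).ne' : ((e t : ℤ) : ℚ) ≠ 0)]
    rw [Finset.prod_const_one, mul_one]
end

section
/- Let e_1 ≤ e_2 ≤ e_3 be positive integers, set s = e_1+e_2+e_3, and let β be the Betti diagram of a complete intersection of type (e_1,e_2,e_3), i.e., β_{i,j} = #{ S ⊆ {1,2,3} : |S| = i and ∑_{k∈S} e_k = j }. Then β = e_1e_2(e_2+e_3)·⟨(0, e_1, e_1+e_2, s)⟩ + e_1e_2(e_3−e_1)·⟨(0, e_2, e_1+e_2, s)⟩ + 2e_1e_2(e_1+e_3−e_2)·⟨(0, e_2, e_1+e_3, s)⟩ + e_1e_2(e_3−e_1)·⟨(0, e_3, e_1+e_3, s)⟩ + e_1e_2(e_2+e_3)·⟨(0, e_3, e_2+e_3, s)⟩, a nonnegative rational combination of pure diagrams. -/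
open scoped BigOperators

lemma pure4 (p q r t : ℤ) (h1 : p < q) (h2 : q < r) (h3 : r < t) :
    pureDiagram [p, q, r, t]
      = AddMonoidAlgebra.single (0, p)
          ((((q:ℚ)-p)⁻¹ * (((r:ℚ)-p)⁻¹ * ((t:ℚ)-p)⁻¹)))
      + AddMonoidAlgebra.single (1, q)
          ((((q:ℚ)-p)⁻¹ * (((r:ℚ)-q)⁻¹ * ((t:ℚ)-q)⁻¹)))
      + AddMonoidAlgebra.single (2, r)
          ((((r:ℚ)-p)⁻¹ * (((r:ℚ)-q)⁻¹ * ((t:ℚ)-r)⁻¹)))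
      + AddMonoidAlgebra.single (3, t)
          ((((t:ℚ)-p)⁻¹ * (((t:ℚ)-q)⁻¹ * ((t:ℚ)-r)⁻¹))) := by
  have c1 : (p:ℚ) < q := by exact_mod_cast h1
  have c2 : (q:ℚ) < r := by exact_mod_cast h2
  have c3 : (r:ℚ) < t := by exact_mod_cast h3
  have hpq : |(p:ℚ) - q| = (q:ℚ) - p := by rw [abs_sub_comm]; exact abs_of_pos (by linarith)
  have hpr : |(p:ℚ) - r| = (r:ℚ) - p := by rw [abs_sub_comm]; exact abs_of_pos (by linarith)
  have hpt : |(p:ℚ) - t| = (t:ℚ) - p := by rw [abs_sub_comm]; exact abs_of_pos (by linarith)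
  have hqp : |(q:ℚ) - p| = (q:ℚ) - p := abs_of_pos (by linarith)
  have hqr : |(q:ℚ) - r| = (r:ℚ) - q := by rw [abs_sub_comm]; exact abs_of_pos (by linarith)
  have hqt : |(q:ℚ) - t| = (t:ℚ) - q := by rw [abs_sub_comm]; exact abs_of_pos (by linarith)
  have hrp : |(r:ℚ) - p| = (r:ℚ) - p := abs_of_pos (by linarith)
  have hrq : |(r:ℚ) - q| = (r:ℚ) - q := abs_of_pos (by linarith)
  have hrt : |(r:ℚ) - t| = (t:ℚ) - r := by rw [abs_sub_comm]; exact abs_of_pos (by linarith)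
  have htp : |(t:ℚ) - p| = (t:ℚ) - p := abs_of_pos (by linarith)
  have htq : |(t:ℚ) - q| = (t:ℚ) - q := abs_of_pos (by linarith)
  have htr : |(t:ℚ) - r| = (t:ℚ) - r := abs_of_pos (by linarith)
  rw [pureDiagram]
  simp only [List.length_cons, List.length_nil]
  rw [Finset.sum_range_succ, Finset.sum_range_succ, Finset.sum_range_succ, Finset.sum_range_one]
  rw [show (Finset.range 4).erase 0 = {1,2,3} by decide,
      show (Finset.range 4).erase 1 = {0,2,3} by decide,
      show (Finset.range 4).erase 2 = {0,1,3} by decide,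
      show (Finset.range 4).erase 3 = {0,1,2} by decide]
  rw [Finset.prod_insert (by decide), Finset.prod_insert (by decide), Finset.prod_singleton,
      Finset.prod_insert (by decide), Finset.prod_insert (by decide), Finset.prod_singleton,
      Finset.prod_insert (by decide), Finset.prod_insert (by decide), Finset.prod_singleton,
      Finset.prod_insert (by decide), Finset.prod_insert (by decide), Finset.prod_singleton]
  simp only [List.getD_cons_zero, List.getD_cons_succ]
  rw [hpq, hpr, hpt, hqp, hqr, hqt, hrp, hrq, hrt, htp, htq, htr]

lemma eval_add (x y : Diagram) (p : ℕ × ℤ) : (x + y).coeff p = x.coeff p + y.coeff p := rfl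

lemma eval_smul (c : ℚ) (x : Diagram) (p : ℕ × ℤ) : (c • x).coeff p = c * x.coeff p := rfl

lemma eval_single (a : ℕ × ℤ) (b : ℚ) (p : ℕ × ℤ) :
    (AddMonoidAlgebra.single a b : Diagram).coeff p = if a = p then b else 0 := by
  rw [AddMonoidAlgebra.coeff_single]; exact Finsupp.single_apply

set_option maxHeartbeats 4000000 in
/-- **Proposition (codimension three).** Let `e₁ ≤ e₂ ≤ e₃` be positive
integers, `s = e₁+e₂+e₃`, and let `β` be the Betti diagram of a complete
intersection of type `(e₁,e₂,e₃)`, i.e.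
`β_{i,j} = #{S ⊆ {1,2,3} : |S| = i and ∑_{k∈S} e_k = j}`.  Then
`β = e₁e₂(e₂+e₃)·⟨(0,e₁,e₁+e₂,s)⟩ + e₁e₂(e₃−e₁)·⟨(0,e₂,e₁+e₂,s)⟩
  + 2e₁e₂(e₁+e₃−e₂)·⟨(0,e₂,e₁+e₃,s)⟩ + e₁e₂(e₃−e₁)·⟨(0,e₃,e₁+e₃,s)⟩
  + e₁e₂(e₂+e₃)·⟨(0,e₃,e₂+e₃,s)⟩`,
a nonnegative rational combination of pure diagrams. -/
theorem betti_ci_codim_three (e₁ e₂ e₃ : ℤ) (h₁ : 0 < e₁) (h₂ : 0 < e₂)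
    (h₃ : 0 < e₃) (h₁₂ : e₁ ≤ e₂) (h₂₃ : e₂ ≤ e₃) (β : Diagram)
    (hβ : ∀ (i : ℕ) (j : ℤ), β.coeff (i, j)
        = ((Finset.univ : Finset (Finset (Fin 3))).filter
            (fun S => S.card = i ∧ ∑ k ∈ S, ![e₁, e₂, e₃] k = j)).card) :
    β = ((e₁ * e₂ * (e₂ + e₃) : ℤ) : ℚ) •
            pureDiagram [0, e₁, e₁ + e₂, e₁ + e₂ + e₃]
        + ((e₁ * e₂ * (e₃ - e₁) : ℤ) : ℚ) •
            pureDiagram [0, e₂, e₁ + e₂, e₁ + e₂ + e₃]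
        + ((2 * e₁ * e₂ * (e₁ + e₃ - e₂) : ℤ) : ℚ) •
            pureDiagram [0, e₂, e₁ + e₃, e₁ + e₂ + e₃]
        + ((e₁ * e₂ * (e₃ - e₁) : ℤ) : ℚ) •
            pureDiagram [0, e₃, e₁ + e₃, e₁ + e₂ + e₃]
        + ((e₁ * e₂ * (e₂ + e₃) : ℤ) : ℚ) •
            pureDiagram [0, e₃, e₂ + e₃, e₁ + e₂ + e₃] := by
  have ha : (e₁ : ℚ) > 0 := by exact_mod_cast h₁
  have hb : (e₂ : ℚ) > 0 := by exact_mod_cast h₂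
  have hc : (e₃ : ℚ) > 0 := by exact_mod_cast h₃
  have hab : (e₁ : ℚ) ≤ e₂ := by exact_mod_cast h₁₂
  have hbc : (e₂ : ℚ) ≤ e₃ := by exact_mod_cast h₂₃
  rw [pure4 _ _ _ _ (by linarith) (by linarith) (by linarith),
      pure4 _ _ _ _ (by linarith) (by linarith) (by linarith),
      pure4 _ _ _ _ (by linarith) (by linarith) (by linarith),
      pure4 _ _ _ _ (by linarith) (by linarith) (by linarith),
      pure4 _ _ _ _ (by linarith) (by linarith) (by linarith)]
  apply AddMonoidAlgebra.ext
  apply Finsupp.ext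
  rintro ⟨i, j⟩
  rw [hβ i j, Finset.card_filter]
  rw [show (Finset.univ : Finset (Finset (Fin 3)))
      = {∅, {0}, {1}, {2}, {0,1}, {0,2}, {1,2}, {0,1,2}} by decide]
  rw [Finset.sum_insert (by decide), Finset.sum_insert (by decide),
      Finset.sum_insert (by decide), Finset.sum_insert (by decide),
      Finset.sum_insert (by decide), Finset.sum_insert (by decide),
      Finset.sum_insert (by decide), Finset.sum_singleton]
  simp only [Finset.sum_insert (by decide : (0:Fin 3) ∉ ({1}:Finset (Fin 3))),
    Finset.sum_insert (by decide : (0:Fin 3) ∉ ({2}:Finset (Fin 3))),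
    Finset.sum_insert (by decide : (1:Fin 3) ∉ ({2}:Finset (Fin 3))),
    Finset.sum_insert (by decide : (0:Fin 3) ∉ ({1,2}:Finset (Fin 3))),
    Finset.sum_singleton, Finset.sum_empty, Finset.card_empty, Finset.card_singleton,
    Matrix.cons_val_zero, Matrix.cons_val_one, Matrix.head_cons, Matrix.cons_val_two,
    Matrix.tail_cons,
    Finset.card_insert_of_notMem (by decide : (0:Fin 3) ∉ ({1}:Finset (Fin 3))),
    Finset.card_insert_of_notMem (by decide : (0:Fin 3) ∉ ({2}:Finset (Fin 3))),
    Finset.card_insert_of_notMem (by decide : (1:Fin 3) ∉ ({2}:Finset (Fin 3))),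
    Finset.card_insert_of_notMem (by decide : (0:Fin 3) ∉ ({1,2}:Finset (Fin 3))),
    Finset.sum_insert
      (by decide : ({1,2}:Finset (Fin 3)) ∉ ({{0,1,2}} : Finset (Finset (Fin 3))))]
  simp only [eval_add, eval_smul, eval_single, Prod.mk.injEq]
  push_cast [apply_ite (Nat.cast : ℕ → ℚ)]
  have d1 : (e₁:ℚ) ≠ 0 := by positivity
  have d2 : (e₂:ℚ) ≠ 0 := by positivity
  have d3 : (e₃:ℚ) ≠ 0 := by positivity
  have d4 : (e₁:ℚ) + e₂ ≠ 0 := by positivity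
  have d5 : (e₁:ℚ) + e₃ ≠ 0 := by positivity
  have d6 : (e₂:ℚ) + e₃ ≠ 0 := by positivity
  have d7 : (e₁:ℚ) + e₃ - e₂ ≠ 0 := by intro h; nlinarith
  have d8 : (e₁:ℚ) + e₂ + e₃ ≠ 0 := by positivity
  have n0 : ((e₁:ℚ)) ≠ 0 := by intro h; linarith
  have n1 : ((e₁:ℚ)+e₂) ≠ 0 := by intro h; linarith
  have n2 : ((e₁:ℚ)+e₂+e₃) ≠ 0 := by intro h; linarith
  have n3 : ((e₁:ℚ)+e₂-e₁) ≠ 0 := by intro h; linarith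
  have n4 : ((e₁:ℚ)+e₂+e₃-e₁) ≠ 0 := by intro h; linarith
  have n5 : ((e₁:ℚ)+e₂+e₃-(e₁+e₂)) ≠ 0 := by intro h; linarith
  have n6 : ((e₂:ℚ)) ≠ 0 := by intro h; linarith
  have n7 : ((e₁:ℚ)+e₂-e₂) ≠ 0 := by intro h; linarith
  have n8 : ((e₁:ℚ)+e₂+e₃-e₂) ≠ 0 := by intro h; linarith
  have n9 : ((e₁:ℚ)+e₃) ≠ 0 := by intro h; linarith
  have n10 : ((e₁:ℚ)+e₃-e₂) ≠ 0 := by intro h; linarith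
  have n11 : ((e₁:ℚ)+e₂+e₃-(e₁+e₃)) ≠ 0 := by intro h; linarith
  have n12 : ((e₃:ℚ)) ≠ 0 := by intro h; linarith
  have n13 : ((e₁:ℚ)+e₃-e₃) ≠ 0 := by intro h; linarith
  have n14 : ((e₁:ℚ)+e₂+e₃-e₃) ≠ 0 := by intro h; linarith
  have n15 : ((e₂:ℚ)+e₃) ≠ 0 := by intro h; linarith
  have n16 : ((e₂:ℚ)+e₃-e₃) ≠ 0 := by intro h; linarith
  have n17 : ((e₁:ℚ)+e₂+e₃-(e₂+e₃)) ≠ 0 := by intro h; linarith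
  rcases i with _|_|_|_|n <;>
    [skip; skip; skip; skip;
     · norm_num [show (0:ℕ) ≠ n+4 by omega, show (1:ℕ) ≠ n+4 by omega,
         show (2:ℕ) ≠ n+4 by omega, show (3:ℕ) ≠ n+4 by omega]] <;>
    norm_num <;> (try simp only [← add_assoc]) <;> split_ifs <;> field_simp <;> ring
end
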